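/- arXiv:2308.16014 — 7 statements merged into one kernel-verified Lean document; each statement's English description precedes it below -/
import Mathlib

section
/- Suppose the polynomial sequences {Φ_n}, {Φ_n^*} satisfy the Szegő recursion with Verblunsky parameters α_n ∈ ℂ, let a_{n+1} ∈ ℂ, and define Φ̃_{n+1}(z) = Φ_{n+1}(z) − a_{n+1}Φ_n(z) and Φ̃_{n+1}^*(z) = Φ_{n+1}^*(z) − conj(a_{n+1}) zΦ_n^*(z). Then for every n ≥ 0 and every z ∈ ℂ: ((z − a_{n+1})(1 − conj(a_{n+1})z) − |α_n|² z)·Φ_n(z) = (1 − conj(a_{n+1})z)·Φ̃_{n+1}(z) + conj(α_n)·Φ̃_{n+1}^*(z), and ((z − a_{n+1})(1 − conj(a_{n+1})z) − |α_n|² z)·Φ_n^*(z) = α_n z·Φ̃_{n+1}(z) + (z − a_{n+1})·Φ̃_{n+1}^*(z). -/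
open Complex ComplexConjugate

/-- Recovering `Φ_n` and `Φ_n^*` from the quasi-orthogonal polynomial
`Φ̃_{n+1} = Φ_{n+1} - a_{n+1} Φ_n` and its reversed version
`Φ̃_{n+1}^* = Φ_{n+1}^* - conj(a_{n+1}) z Φ_n^*`. -/
theorem stmt_1
    (Φ Φs : ℕ → ℂ → ℂ) (α a : ℕ → ℂ)
    (h0 : ∀ z : ℂ, Φ 0 z = 1) (h0s : ∀ z : ℂ, Φs 0 z = 1)
    (hrec : ∀ (n : ℕ) (z : ℂ), Φ (n + 1) z = z * Φ n z - conj (α n) * Φs n z)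
    (hrecs : ∀ (n : ℕ) (z : ℂ), Φs (n + 1) z = Φs n z - α n * z * Φ n z) :
    ∀ (n : ℕ) (z : ℂ),
      ((z - a (n + 1)) * (1 - conj (a (n + 1)) * z) - (‖α n‖ : ℂ) ^ 2 * z) * Φ n z
          = (1 - conj (a (n + 1)) * z) * (Φ (n + 1) z - a (n + 1) * Φ n z)
            + conj (α n) * (Φs (n + 1) z - conj (a (n + 1)) * z * Φs n z)
      ∧
      ((z - a (n + 1)) * (1 - conj (a (n + 1)) * z) - (‖α n‖ : ℂ) ^ 2 * z) * Φs n z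
          = α n * z * (Φ (n + 1) z - a (n + 1) * Φ n z)
            + (z - a (n + 1)) * (Φs (n + 1) z - conj (a (n + 1)) * z * Φs n z) := by
  intro n z
  have hnorm : (‖α n‖ : ℂ) ^ 2 = α n * conj (α n) := by
    rw [Complex.mul_conj']
  constructor <;> rw [hrec, hrecs, hnorm] <;> ring
end

section
/- Suppose the polynomial sequences {Φ_n}, {Φ_n^*} satisfy the Szegő recursion with Verblunsky parameters α_n ∈ ℂ, let a_{n+1} ∈ ℂ with a_{n+1} ≠ 0, and define Φ̃_{n+1}(z) = Φ_{n+1}(z) − a_{n+1}Φ_n(z) and Φ̃_{n+1}^*(z) = Φ_{n+1}^*(z) − conj(a_{n+1}) zΦ_n^*(z). If α_n ≠ 0, then at the point ζ = 1/conj(a_{n+1}) one has α_n·Φ_n(ζ) + conj(a_{n+1})·Φ̃_{n+1}^*(ζ) = 0. Consequently Φ_n(ζ) = 0 if and only if Φ̃_{n+1}^*(ζ) = 0, and whenever Φ_n(ζ) ≠ 0 one has α_n = − conj(a_{n+1})·Φ̃_{n+1}^*(ζ)/Φ_n(ζ). -/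
open Complex ComplexConjugate

/-- At the point `ζ = 1/conj(a_{n+1})` one has
`α_n Φ_n(ζ) + conj(a_{n+1}) Φ̃_{n+1}^*(ζ) = 0`, hence `Φ_n(ζ) = 0 ↔ Φ̃_{n+1}^*(ζ) = 0`,
and when `Φ_n(ζ) ≠ 0`, `α_n = -conj(a_{n+1}) Φ̃_{n+1}^*(ζ) / Φ_n(ζ)`. -/
theorem stmt_3
    (Φ Φs : ℕ → ℂ → ℂ) (α a : ℕ → ℂ)
    (h0 : ∀ z : ℂ, Φ 0 z = 1) (h0s : ∀ z : ℂ, Φs 0 z = 1)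
    (hrec : ∀ (n : ℕ) (z : ℂ), Φ (n + 1) z = z * Φ n z - conj (α n) * Φs n z)
    (hrecs : ∀ (n : ℕ) (z : ℂ), Φs (n + 1) z = Φs n z - α n * z * Φ n z)
    (n : ℕ) (han : a (n + 1) ≠ 0) (hαn : α n ≠ 0)
    (ζ : ℂ) (hζ : ζ = (conj (a (n + 1)))⁻¹) :
    α n * Φ n ζ
        + conj (a (n + 1)) * (Φs (n + 1) ζ - conj (a (n + 1)) * ζ * Φs n ζ) = 0
    ∧ (Φ n ζ = 0 ↔ Φs (n + 1) ζ - conj (a (n + 1)) * ζ * Φs n ζ = 0)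
    ∧ (Φ n ζ ≠ 0 →
        α n = -conj (a (n + 1)) * (Φs (n + 1) ζ - conj (a (n + 1)) * ζ * Φs n ζ) / Φ n ζ) := by
  have hb : conj (a (n + 1)) ≠ 0 := by simpa using han
  have hbζ : conj (a (n + 1)) * ζ = 1 := by rw [hζ]; field_simp
  have key : Φs (n + 1) ζ - conj (a (n + 1)) * ζ * Φs n ζ = -(α n * ζ * Φ n ζ) := by
    rw [hrecs, hbζ]; ring
  have hζne : ζ ≠ 0 := by
    intro h; rw [h, mul_zero] at hbζ; exact one_ne_zero hbζ.symm
  refine ⟨?_, ?_, ?_⟩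
  · rw [key]
    have : conj (a (n + 1)) * -(α n * ζ * Φ n ζ) = -(α n * Φ n ζ) := by
      rw [show conj (a (n + 1)) * -(α n * ζ * Φ n ζ)
          = -(α n * Φ n ζ * (conj (a (n + 1)) * ζ)) by ring, hbζ, mul_one]
    rw [this]; ring
  · rw [key]
    constructor
    · intro h; rw [h]; ring
    · intro h
      have := neg_eq_zero.mp h
      rcases mul_eq_zero.mp this with h' | h'
      · rcases mul_eq_zero.mp h' with h'' | h''
        · exact absurd h'' hαn
        · exact absurd h'' hζne
      · exact h'
  · intro hΦ
    rw [key]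
    field_simp
    exact hbζ.symm
end

section
/- Let a, b ∈ ℂ with |a| < 1 and |b| < 1. For n ≥ 2 set Φ̃_n(z) = z^{n−2}(z − a)(z − b). Then for every n ≥ 2 and every integer m with 0 ≤ m ≤ n − 1, ∫_0^{2π} Φ̃_n(e^{iθ}) · e^{−imθ} · (1/(|e^{iθ} − a|²·|e^{iθ} − b|²)) dθ = 0. In particular, ∫_0^{2π} Φ̃_n(e^{iθ}) conj(Φ̃_m(e^{iθ})) (1/(|e^{iθ} − a|²|e^{iθ} − b|²)) dθ = 0 for all n > m ≥ 2. -/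
open Complex ComplexConjugate Metric

private lemma sq_norm_cast' (w : ℂ) : ((‖w‖ : ℝ) : ℂ)^2 = w * (starRingEnd ℂ) w := by
  rw [Complex.mul_conj]; norm_cast
  simp [Complex.normSq_eq_norm_sq]

private lemma integral_circle_eq' (g : ℂ → ℂ)
    (hg : DiffContOnCl ℂ g (ball (0:ℂ) 1)) :
    (∫ θ in (0:ℝ)..(2*Real.pi), g (Complex.exp ((θ:ℂ)*Complex.I)))
      = 2 * Real.pi * g 0 := by
  have h := hg.circleIntegral_sub_inv_smul (w := 0) (by simp)
  rw [circleIntegral] at h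
  simp only [deriv_circleMap, smul_eq_mul, sub_zero] at h
  have key : ∀ θ : ℝ, circleMap 0 1 θ * Complex.I * ((circleMap 0 1 θ)⁻¹ * g (circleMap 0 1 θ))
      = Complex.I * g (circleMap 0 1 θ) := by
    intro θ
    have h0 : circleMap 0 1 θ ≠ 0 := by
      simp [circleMap, Complex.exp_ne_zero]
    field_simp
  rw [intervalIntegral.integral_congr (fun θ _ => key θ),
    intervalIntegral.integral_const_mul] at h
  have hmap : ∀ θ : ℝ, circleMap 0 1 θ = Complex.exp ((θ:ℂ)*Complex.I) := by
    intro θ; simp [circleMap]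
  rw [intervalIntegral.integral_congr (fun θ _ => by rw [hmap θ])] at h
  refine mul_left_cancel₀ (Complex.I_ne_zero) ?_
  rw [h]; ring

private lemma pointwise1' (a b u : ℂ) (hu : ‖u‖ = 1) (hua : u - a ≠ 0) (hub : u - b ≠ 0)
    (hca : 1 - (starRingEnd ℂ) a * u ≠ 0) (hcb : 1 - (starRingEnd ℂ) b * u ≠ 0)
    (n m : ℕ) (hn : 2 ≤ n) (hm : m ≤ n) :
    u ^ (n-2) * (u - a) * (u - b) * (u⁻¹)^m * ((1 / (‖u - a‖^2 * ‖u - b‖^2) : ℝ) : ℂ)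
      = u ^ (n-m) * ((1 - (starRingEnd ℂ) a * u) * (1 - (starRingEnd ℂ) b * u))⁻¹ := by
  have hu0 : u ≠ 0 := by
    intro h; rw [h] at hu; simp at hu
  have hconj : (starRingEnd ℂ) u = u⁻¹ := (Complex.inv_eq_conj hu).symm
  have e1 : u⁻¹ - (starRingEnd ℂ) a = u⁻¹ * (1 - (starRingEnd ℂ) a * u) := by
    field_simp
  have e2 : u⁻¹ - (starRingEnd ℂ) b = u⁻¹ * (1 - (starRingEnd ℂ) b * u) := by
    field_simp
  push_cast
  rw [sq_norm_cast' (u - a), sq_norm_cast' (u - b), map_sub, map_sub, hconj, e1, e2,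
    pow_sub₀ u hu0 hm, pow_sub₀ u hu0 hn]
  field_simp
  ring_nf
  rw [← mul_pow, mul_inv_cancel₀ hu0, one_pow, one_mul]

private lemma pointwise2' (a b u : ℂ) (hu : ‖u‖ = 1) (hua : u - a ≠ 0) (hub : u - b ≠ 0)
    (n m : ℕ) (hm : 2 ≤ m) (hmn : m ≤ n) :
    u ^ (n-2) * (u - a) * (u - b)
      * (starRingEnd ℂ) (u ^ (m-2) * (u - a) * (u - b))
      * ((1 / (‖u - a‖^2 * ‖u - b‖^2) : ℝ) : ℂ)
      = u ^ (n-m) := by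
  have hu0 : u ≠ 0 := by
    intro h; rw [h] at hu; simp at hu
  have hconj : (starRingEnd ℂ) u = u⁻¹ := (Complex.inv_eq_conj hu).symm
  have hC : (starRingEnd ℂ) (u - a) ≠ 0 := by
    intro h; apply hua
    have := congrArg (starRingEnd ℂ) h; simpa using this
  have hD : (starRingEnd ℂ) (u - b) ≠ 0 := by
    intro h; apply hub
    have := congrArg (starRingEnd ℂ) h; simpa using this
  have step : u ^ (n-2) * (u - a) * (u - b)
      * (starRingEnd ℂ) (u ^ (m-2) * (u - a) * (u - b))
      * ((1 / (‖u - a‖^2 * ‖u - b‖^2) : ℝ) : ℂ)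
      = u ^ (n-2) * (((starRingEnd ℂ) u) ^ (m-2)) := by
    push_cast
    rw [sq_norm_cast' (u - a), sq_norm_cast' (u - b), map_mul, map_mul, map_pow]
    set C := (starRingEnd ℂ) (u - a)
    set D := (starRingEnd ℂ) (u - b)
    field_simp
  rw [step, hconj, inv_pow, ← pow_sub₀ u hu0 (by omega : m - 2 ≤ n - 2)]
  congr 1; omega

private lemma gdiff' (a b : ℂ) (ha : ‖a‖ < 1) (hb : ‖b‖ < 1) (k : ℕ) :
    DiffContOnCl ℂ
      (fun z : ℂ => z ^ k * ((1 - (starRingEnd ℂ) a * z) * (1 - (starRingEnd ℂ) b * z))⁻¹)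
      (ball (0:ℂ) 1) := by
  apply DifferentiableOn.diffContOnCl
  rw [closure_ball (0:ℂ) one_ne_zero]
  intro z hz
  have hz1 : ‖z‖ ≤ 1 := by simpa [Metric.mem_closedBall, dist_zero_right] using hz
  have key : ∀ c : ℂ, ‖c‖ < 1 → 1 - (starRingEnd ℂ) c * z ≠ 0 := by
    intro c hc h
    rw [sub_eq_zero] at h
    have hlt : ‖(starRingEnd ℂ) c * z‖ < 1 := by
      rw [norm_mul, RCLike.norm_conj]
      calc ‖c‖ * ‖z‖ ≤ ‖c‖ * 1 := by nlinarith [norm_nonneg c]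
        _ < 1 := by simpa using hc
    rw [← h] at hlt; simp at hlt
  apply DifferentiableAt.differentiableWithinAt
  apply DifferentiableAt.mul (differentiableAt_pow k)
  apply DifferentiableAt.inv
  · fun_prop
  · exact mul_ne_zero (key a ha) (key b hb)

private lemma norm_exp_theta' (θ : ℝ) : ‖Complex.exp ((θ:ℂ) * Complex.I)‖ = 1 := by
  simp [Complex.norm_exp_ofReal_mul_I θ]

/-- `Φ̃_n(z) = z^{n-2}(z-a)(z-b)` is orthogonal to `z^m`, `0 ≤ m ≤ n-1`, with respect to
the Bernstein–Szegő type measure `dθ/(|e^{iθ}-a|²|e^{iθ}-b|²)`; in particular the `Φ̃_n`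
for `n ≥ 2` are mutually orthogonal. -/
theorem stmt_5
    (a b : ℂ) (ha : ‖a‖ < 1) (hb : ‖b‖ < 1)
    (F : ℕ → ℂ → ℂ)
    (hF : ∀ n : ℕ, 2 ≤ n → ∀ z : ℂ, F n z = z ^ (n - 2) * (z - a) * (z - b)) :
    (∀ n : ℕ, 2 ≤ n → ∀ m : ℕ, m ≤ n - 1 →
      (∫ θ in (0:ℝ)..(2 * Real.pi),
        F n (Complex.exp ((θ : ℂ) * Complex.I))
          * Complex.exp (-(m : ℂ) * (θ : ℂ) * Complex.I)
          * ((1 / (‖Complex.exp ((θ : ℂ) * Complex.I) - a‖ ^ 2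
              * ‖Complex.exp ((θ : ℂ) * Complex.I) - b‖ ^ 2) : ℝ) : ℂ)) = 0)
    ∧ (∀ n m : ℕ, 2 ≤ m → m < n →
      (∫ θ in (0:ℝ)..(2 * Real.pi),
        F n (Complex.exp ((θ : ℂ) * Complex.I))
          * conj (F m (Complex.exp ((θ : ℂ) * Complex.I)))
          * ((1 / (‖Complex.exp ((θ : ℂ) * Complex.I) - a‖ ^ 2
              * ‖Complex.exp ((θ : ℂ) * Complex.I) - b‖ ^ 2) : ℝ) : ℂ)) = 0) := by
  have hunit : ∀ θ : ℝ,
      (Complex.exp ((θ:ℂ) * Complex.I) - a ≠ 0) ∧ (Complex.exp ((θ:ℂ) * Complex.I) - b ≠ 0) ∧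
      (1 - (starRingEnd ℂ) a * Complex.exp ((θ:ℂ) * Complex.I) ≠ 0) ∧
      (1 - (starRingEnd ℂ) b * Complex.exp ((θ:ℂ) * Complex.I) ≠ 0) := by
    intro θ
    have hu := norm_exp_theta' θ
    have h1 : ∀ c : ℂ, ‖c‖ < 1 → Complex.exp ((θ:ℂ) * Complex.I) - c ≠ 0 := by
      intro c hc h
      rw [sub_eq_zero] at h
      rw [h] at hu
      exact absurd hu (ne_of_lt hc)
    have h2 : ∀ c : ℂ, ‖c‖ < 1 → 1 - (starRingEnd ℂ) c * Complex.exp ((θ:ℂ) * Complex.I) ≠ 0 := by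
      intro c hc h
      rw [sub_eq_zero] at h
      have hlt : ‖(starRingEnd ℂ) c * Complex.exp ((θ:ℂ) * Complex.I)‖ < 1 := by
        rw [norm_mul, RCLike.norm_conj, hu, mul_one]; exact hc
      rw [← h] at hlt; simp at hlt
    exact ⟨h1 a ha, h1 b hb, h2 a ha, h2 b hb⟩
  constructor
  · intro n hn m hm
    have hmn : m ≤ n := by omega
    have hexp : ∀ θ : ℝ, Complex.exp (-(m : ℂ) * (θ:ℂ) * Complex.I)
        = ((Complex.exp ((θ:ℂ) * Complex.I))⁻¹)^m := by
      intro θ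
      rw [inv_pow, ← Complex.exp_nat_mul, ← Complex.exp_neg]
      congr 1; ring
    have hcong : ∀ θ : ℝ,
        F n (Complex.exp ((θ : ℂ) * Complex.I))
          * Complex.exp (-(m : ℂ) * (θ : ℂ) * Complex.I)
          * ((1 / (‖Complex.exp ((θ : ℂ) * Complex.I) - a‖ ^ 2
              * ‖Complex.exp ((θ : ℂ) * Complex.I) - b‖ ^ 2) : ℝ) : ℂ)
        = (fun z : ℂ => z ^ (n-m)
            * ((1 - (starRingEnd ℂ) a * z) * (1 - (starRingEnd ℂ) b * z))⁻¹)
            (Complex.exp ((θ : ℂ) * Complex.I)) := by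
      intro θ
      obtain ⟨hua, hub, hca, hcb⟩ := hunit θ
      rw [hF n hn, hexp θ]
      exact pointwise1' a b _ (norm_exp_theta' θ) hua hub hca hcb n m hn hmn
    rw [intervalIntegral.integral_congr (fun θ _ => hcong θ),
      integral_circle_eq' _ (gdiff' a b ha hb (n-m))]
    have : (0:ℂ) ^ (n - m) = 0 := zero_pow (by omega)
    simp [this]
  · intro n m hm2 hmn
    have hc : ((n - m : ℕ) : ℂ) * Complex.I ≠ 0 :=
      mul_ne_zero (Nat.cast_ne_zero.mpr (by omega)) Complex.I_ne_zero
    have hcong : ∀ θ : ℝ,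
        F n (Complex.exp ((θ : ℂ) * Complex.I))
          * conj (F m (Complex.exp ((θ : ℂ) * Complex.I)))
          * ((1 / (‖Complex.exp ((θ : ℂ) * Complex.I) - a‖ ^ 2
              * ‖Complex.exp ((θ : ℂ) * Complex.I) - b‖ ^ 2) : ℝ) : ℂ)
        = Complex.exp ((((n - m : ℕ) : ℂ) * Complex.I) * (θ : ℂ)) := by
      intro θ
      obtain ⟨hua, hub, -, -⟩ := hunit θ
      rw [hF n (by omega), hF m hm2,
        pointwise2' a b _ (norm_exp_theta' θ) hua hub n m hm2 hmn.le,
        ← Complex.exp_nat_mul]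
      congr 1; ring
    rw [intervalIntegral.integral_congr (fun θ _ => hcong θ),
      integral_exp_mul_complex hc]
    have h1 : (((n - m : ℕ) : ℂ) * Complex.I) * ((2 * Real.pi : ℝ) : ℂ)
        = ((n - m : ℕ) : ℂ) * (2 * (Real.pi : ℂ) * Complex.I) := by
      push_cast; ring
    rw [h1, Complex.exp_nat_mul_two_pi_mul_I]
    simp
end

section
/- Let μ̃ be a nontrivial finite positive Borel measure on the unit circle, let {Φ_n} be monic polynomials with deg Φ_n = n and Φ_0 = 1, let a_n ∈ ℂ, and suppose that Φ̃_0 = 1, Φ̃_n = Φ_n − a_nΦ_{n−1} (n ≥ 1) is a monic orthogonal polynomial sequence for μ̃. Then for every n ≥ 1: ‖Φ_n‖_{μ̃} ≥ (μ̃(∂𝔻))^{1/2} · ∏_{j=1}^{n} |a_j|. (The paper states the lower bound with μ̃(∂𝔻) in place of (μ̃(∂𝔻))^{1/2}; the square root is required since ‖Φ_0‖_{μ̃} = (μ̃(∂𝔻))^{1/2}.) -/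
open MeasureTheory Complex ComplexConjugate

/-- If `Φ̃_n = Φ_n - a_n Φ_{n-1}` is a monic OPS for `μ̃`, then
`‖Φ_n‖_{μ̃} ≥ (μ̃(∂𝔻))^{1/2} ∏_{j=1}^n |a_j|`. -/
theorem stmt_12
    (μt : Measure ℂ) [IsFiniteMeasure μt]
    (hsupp : μt (Metric.sphere (0 : ℂ) 1)ᶜ = 0)
    (hnt : ∀ p : Polynomial ℂ, p ≠ 0 → 0 < ∫ z, ‖p.eval z‖ ^ 2 ∂μt)
    (Φ : ℕ → Polynomial ℂ)
    (hmonic : ∀ n, (Φ n).Monic) (hdeg : ∀ n, (Φ n).natDegree = n)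
    (hΦ0 : Φ 0 = 1)
    (a : ℕ → ℂ)
    (Φt : ℕ → Polynomial ℂ)
    (hΦt0 : Φt 0 = 1)
    (hΦt : ∀ n : ℕ, 1 ≤ n → Φt n = Φ n - Polynomial.C (a n) * Φ (n - 1))
    (horth : ∀ m n : ℕ, m ≠ n →
      (∫ z, (Φt n).eval z * conj ((Φt m).eval z) ∂μt) = 0) :
    ∀ n : ℕ, 1 ≤ n →
      Real.sqrt ((μt (Metric.sphere (0 : ℂ) 1)).toReal) * ∏ j ∈ Finset.Icc 1 n, ‖a j‖
        ≤ Real.sqrt (∫ z, ‖(Φ n).eval z‖ ^ 2 ∂μt) := by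
  -- a.e. every point is on the sphere
  have hae : ∀ᵐ z ∂μt, z ∈ Metric.sphere (0:ℂ) 1 := by
    rw [ae_iff]
    exact hsupp
  -- every continuous function is integrable w.r.t. μt
  have hint : ∀ f : ℂ → ℂ, Continuous f → Integrable f μt := by
    intro f hf
    obtain ⟨C, hC⟩ := (isCompact_sphere (0:ℂ) 1).exists_bound_of_continuousOn
      hf.continuousOn
    exact ⟨hf.aestronglyMeasurable,
      HasFiniteIntegral.of_bounded (C := C) (hae.mono fun z hz => hC z hz)⟩
  have hcont : ∀ p q : Polynomial ℂ,
      Continuous (fun z => p.eval z * conj (q.eval z)) := by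
    intro p q
    exact (p.continuous).mul (Complex.continuous_conj.comp q.continuous)
  -- key orthogonality: Φ̃ₙ ⟂ Φₘ for m < n
  have hkey : ∀ n m : ℕ, m < n →
      (∫ z, (Φt n).eval z * conj ((Φ m).eval z) ∂μt) = 0 := by
    intro n m
    induction m with
    | zero =>
      intro h
      rw [hΦ0, ← hΦt0]
      exact horth 0 n (by omega)
    | succ m ih =>
      intro h
      have h1 : Φ (m+1) = Φt (m+1) + Polynomial.C (a (m+1)) * Φ m := by
        rw [hΦt (m+1) (by omega)]
        simp
      have e : ∀ z, (Φt n).eval z * conj ((Φ (m+1)).eval z)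
          = (Φt n).eval z * conj ((Φt (m+1)).eval z)
            + conj (a (m+1)) * ((Φt n).eval z * conj ((Φ m).eval z)) := by
        intro z
        rw [h1]
        simp only [Polynomial.eval_add, Polynomial.eval_mul, Polynomial.eval_C,
          map_add, map_mul]
        ring
      have hIa : Integrable (fun z => (Φt n).eval z * conj ((Φt (m+1)).eval z)) μt :=
        hint _ (hcont _ _)
      have hIb : Integrable (fun z =>
          conj (a (m+1)) * ((Φt n).eval z * conj ((Φ m).eval z))) μt :=
        (hint _ (hcont (Φt n) (Φ m))).const_mul _
      rw [integral_congr_ae (Filter.Eventually.of_forall e), integral_add hIa hIb,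
        integral_const_mul, horth (m+1) n (by omega), ih (by omega)]
      ring
  -- self inner product equals real integral of squared norm
  have hself : ∀ p : Polynomial ℂ,
      (∫ z, p.eval z * conj (p.eval z) ∂μt)
        = ((∫ z, ‖p.eval z‖ ^ 2 ∂μt : ℝ) : ℂ) := by
    intro p
    calc (∫ z, p.eval z * conj (p.eval z) ∂μt)
        = ∫ z, ((‖p.eval z‖ ^ 2 : ℝ) : ℂ) ∂μt := by
          apply integral_congr_ae
          filter_upwards with z
          rw [Complex.mul_conj]
          norm_cast
          rw [Complex.normSq_eq_norm_sq]
      _ = _ := integral_ofReal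
  -- norms are nonnegative
  have hNn : ∀ p : Polynomial ℂ, 0 ≤ ∫ z, ‖p.eval z‖ ^ 2 ∂μt :=
    fun p => integral_nonneg fun z => sq_nonneg _
  -- the recursive inequality
  have hstep : ∀ n : ℕ, 1 ≤ n →
      ‖a n‖ ^ 2 * (∫ z, ‖(Φ (n-1)).eval z‖ ^ 2 ∂μt)
        ≤ ∫ z, ‖(Φ n).eval z‖ ^ 2 ∂μt := by
    intro n hn
    have h1 : Φ n = Φt n + Polynomial.C (a n) * Φ (n-1) := by
      rw [hΦt n hn]; simp
    have e : ∀ z, (Φ n).eval z * conj ((Φ n).eval z)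
        = (Φt n).eval z * conj ((Φt n).eval z)
          + conj (a n) * ((Φt n).eval z * conj ((Φ (n-1)).eval z))
          + a n * conj ((Φt n).eval z * conj ((Φ (n-1)).eval z))
          + (a n * conj (a n)) *
              ((Φ (n-1)).eval z * conj ((Φ (n-1)).eval z)) := by
      intro z
      rw [h1]
      simp only [Polynomial.eval_add, Polynomial.eval_mul, Polynomial.eval_C,
        map_add, map_mul, Complex.conj_conj]
      ring
    have hI1 := hint _ (hcont (Φt n) (Φt n))
    have hI2 := hint _ (hcont (Φt n) (Φ (n-1)))
    have hI3 : Integrable (fun z => conj ((Φt n).eval z * conj ((Φ (n-1)).eval z))) μt := by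
      apply hint
      exact Complex.continuous_conj.comp (hcont (Φt n) (Φ (n-1)))
    have hI4 := hint _ (hcont (Φ (n-1)) (Φ (n-1)))
    have hconjzero : (∫ z, conj ((Φt n).eval z * conj ((Φ (n-1)).eval z)) ∂μt) = 0 := by
      rw [integral_conj, hkey n (n-1) (by omega)]
      simp
    have hcx : (∫ z, (Φ n).eval z * conj ((Φ n).eval z) ∂μt)
        = (∫ z, (Φt n).eval z * conj ((Φt n).eval z) ∂μt)
          + (a n * conj (a n)) *
              (∫ z, (Φ (n-1)).eval z * conj ((Φ (n-1)).eval z) ∂μt) := by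
      have hW : Integrable (fun z => (Φt n).eval z * conj ((Φt n).eval z)
          + conj (a n) * ((Φt n).eval z * conj ((Φ (n-1)).eval z))) μt :=
        hI1.add (hI2.const_mul _)
      have hWX : Integrable (fun z => (Φt n).eval z * conj ((Φt n).eval z)
          + conj (a n) * ((Φt n).eval z * conj ((Φ (n-1)).eval z))
          + a n * conj ((Φt n).eval z * conj ((Φ (n-1)).eval z))) μt :=
        hW.add (hI3.const_mul _)
      rw [integral_congr_ae (Filter.Eventually.of_forall e)]
      rw [integral_add hWX (hI4.const_mul _),
        integral_add hW (hI3.const_mul _),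
        integral_add hI1 (hI2.const_mul _),
        integral_const_mul, integral_const_mul, integral_const_mul,
        hkey n (n-1) (by omega), hconjzero]
      ring
    rw [hself, hself, hself] at hcx
    have hre : (∫ z, ‖(Φ n).eval z‖ ^ 2 ∂μt)
        = (∫ z, ‖(Φt n).eval z‖ ^ 2 ∂μt)
          + ‖a n‖ ^ 2 * (∫ z, ‖(Φ (n-1)).eval z‖ ^ 2 ∂μt) := by
      have h2 : a n * conj (a n) = ((‖a n‖ ^ 2 : ℝ) : ℂ) := by
        rw [Complex.mul_conj]
        norm_cast
        rw [Complex.normSq_eq_norm_sq]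
      rw [h2, ← Complex.ofReal_mul, ← Complex.ofReal_add] at hcx
      exact_mod_cast hcx
    rw [hre]
    nlinarith [hNn (Φt n)]
  -- base value
  have hbase : (∫ z, ‖(Φ 0).eval z‖ ^ 2 ∂μt)
      = (μt (Metric.sphere (0:ℂ) 1)).toReal := by
    have hμ : μt (Metric.sphere (0:ℂ) 1) = μt Set.univ := by
      have := measure_add_measure_compl (μ := μt) (s := Metric.sphere (0:ℂ) 1)
        Metric.isClosed_sphere.measurableSet
      rw [hsupp, add_zero] at this
      exact this
    rw [hΦ0, hμ]
    simp
    rfl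
  -- squared inequality by induction
  have hsq : ∀ n : ℕ,
      (∏ j ∈ Finset.Icc 1 n, ‖a j‖) ^ 2 * (μt (Metric.sphere (0:ℂ) 1)).toReal
        ≤ ∫ z, ‖(Φ n).eval z‖ ^ 2 ∂μt := by
    intro n
    induction n with
    | zero =>
      simp only [Finset.Icc_eq_empty_of_lt Nat.zero_lt_one, Finset.prod_empty, one_pow, one_mul]
      exact le_of_eq hbase.symm
    | succ n ih =>
      have h1 := hstep (n+1) (by omega)
      simp only [Nat.add_sub_cancel] at h1
      rw [Finset.prod_Icc_succ_top (by omega)]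
      calc ((∏ j ∈ Finset.Icc 1 n, ‖a j‖) * ‖a (n+1)‖ : ℝ) ^ 2
            * (μt (Metric.sphere (0:ℂ) 1)).toReal
          = ‖a (n+1)‖ ^ 2 * ((∏ j ∈ Finset.Icc 1 n, ‖a j‖) ^ 2
              * (μt (Metric.sphere (0:ℂ) 1)).toReal) := by ring
        _ ≤ ‖a (n+1)‖ ^ 2 * (∫ z, ‖(Φ n).eval z‖ ^ 2 ∂μt) := by
            apply mul_le_mul_of_nonneg_left ih (sq_nonneg _)
        _ ≤ _ := h1
  -- conclude
  intro n _
  have h := hsq n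
  have hp : 0 ≤ ∏ j ∈ Finset.Icc 1 n, ‖a j‖ :=
    Finset.prod_nonneg fun j _ => norm_nonneg _
  calc Real.sqrt ((μt (Metric.sphere (0:ℂ) 1)).toReal)
        * ∏ j ∈ Finset.Icc 1 n, ‖a j‖
      = Real.sqrt ((∏ j ∈ Finset.Icc 1 n, ‖a j‖) ^ 2
          * (μt (Metric.sphere (0:ℂ) 1)).toReal) := by
        rw [Real.sqrt_mul (sq_nonneg _), Real.sqrt_sq hp]; ring
    _ ≤ Real.sqrt (∫ z, ‖(Φ n).eval z‖ ^ 2 ∂μt) := Real.sqrt_le_sqrt h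
end

section
/- Let μ and μ̃ be finite positive Borel measures on the unit circle, with μ̃ nontrivial. Let {Φ_n} be a monic orthogonal polynomial sequence for μ with Φ_0 = 1, let a_n ∈ ℂ with a_0 = 0, and suppose Φ̃_0 = 1, Φ̃_n = Φ_n − a_nΦ_{n−1} (n ≥ 1) is a monic orthogonal polynomial sequence for μ̃. Put k̃_j = ‖Φ̃_j‖_{μ̃}^{−1}, φ̃_j = k̃_j·Φ̃_j, and K_n(z,w,μ̃) = Σ_{j=0}^n conj(φ̃_j(w))·φ̃_j(z). Then for every n ≥ 0 and every z ∈ ℂ: ∫_{∂𝔻} |K_n(z,s,μ̃)|² dμ(s) ≤ m₀(μ)·K_n(z,z,μ̃)·Σ_{j=0}^{n} (1 + |a_j|²)·k̃_j², where m₀(μ) = μ(∂𝔻). -/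
open MeasureTheory Complex ComplexConjugate


private lemma integrable_cont (μ : Measure ℂ) [IsFiniteMeasure μ]
    (hμ : μ (Metric.sphere (0:ℂ) 1)ᶜ = 0) {E : Type*} [NormedAddCommGroup E]
    (f : ℂ → E) (hf : Continuous f) : Integrable f μ := by
  have hae : ∀ᵐ x ∂μ, x ∈ Metric.sphere (0:ℂ) 1 := by
    rw [ae_iff]
    simpa [Set.compl_def] using hμ
  rw [← Measure.restrict_eq_self_of_ae_mem hae]
  exact hf.continuousOn.integrableOn_compact (isCompact_sphere 0 1)

private lemma cont_pc (p q : Polynomial ℂ) :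
    Continuous (fun z => p.eval z * conj (q.eval z)) :=
  p.continuous.mul (RCLike.continuous_conj.comp q.continuous)

private lemma self_inner (μ : Measure ℂ) (p : Polynomial ℂ) :
    (∫ z, p.eval z * conj (p.eval z) ∂μ)
      = ((∫ z, ‖p.eval z‖^2 ∂μ : ℝ) : ℂ) := by
  rw [show ((∫ z, ‖p.eval z‖^2 ∂μ : ℝ) : ℂ) = ∫ z, ((‖p.eval z‖^2 : ℝ) : ℂ) ∂μ from (integral_ofReal (𝕜 := ℂ)).symm]
  apply integral_congr_ae
  filter_upwards with z
  rw [Complex.mul_conj, Complex.normSq_eq_norm_sq]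

private lemma orth_low (μ : Measure ℂ) [IsFiniteMeasure μ]
    (hμ : μ (Metric.sphere (0:ℂ) 1)ᶜ = 0)
    (Φ : ℕ → Polynomial ℂ) (hmonic : ∀ n, (Φ n).Monic) (hdeg : ∀ n, (Φ n).natDegree = n)
    (hΦ0 : Φ 0 = 1)
    (horth : ∀ m n : ℕ, m ≠ n → (∫ z, (Φ n).eval z * conj ((Φ m).eval z) ∂μ) = 0) :
    ∀ (m n : ℕ), m < n → ∀ p : Polynomial ℂ, p.natDegree ≤ m →
      (∫ z, (Φ n).eval z * conj (p.eval z) ∂μ) = 0 := by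
  intro m
  induction m with
  | zero =>
    intro n hmn p hp
    have hpc : p = Polynomial.C (p.coeff 0) := Polynomial.eq_C_of_natDegree_le_zero hp
    have heq : ∀ z : ℂ, (Φ n).eval z * conj (p.eval z)
        = conj (p.coeff 0) * ((Φ n).eval z * conj ((Φ 0).eval z)) := by
      intro z
      rw [hpc]
      simp [hΦ0]
      ring
    simp_rw [heq]
    rw [integral_const_mul, horth 0 n (by omega), mul_zero]
  | succ m ih =>
    intro n hmn p hp
    set c := p.coeff (m+1) with hc
    set q := p - Polynomial.C c * Φ (m+1) with hq
    have hqdeg : q.natDegree ≤ m := by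
      rw [Polynomial.natDegree_le_iff_coeff_eq_zero]
      intro k hk
      rw [hq]
      simp only [Polynomial.coeff_sub, Polynomial.coeff_C_mul]
      rcases eq_or_lt_of_le (Nat.succ_le_of_lt hk) with h | h
      · rw [← h]
        have h1 : (Φ (m+1)).coeff (m+1) = 1 := by
          have := (hmonic (m+1)).coeff_natDegree
          rwa [hdeg] at this
        rw [h1, mul_one, ← hc, sub_self]
      · rw [Polynomial.coeff_eq_zero_of_natDegree_lt (lt_of_le_of_lt hp h),
          Polynomial.coeff_eq_zero_of_natDegree_lt (by rw [hdeg]; exact h)]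
        simp
    have h1 : (∫ z, (Φ n).eval z * conj (q.eval z) ∂μ) = 0 := ih n (by omega) q hqdeg
    have h2 := horth (m+1) n (by omega)
    have heq : ∀ z : ℂ, (Φ n).eval z * conj (p.eval z)
        = (Φ n).eval z * conj (q.eval z)
          + conj c * ((Φ n).eval z * conj ((Φ (m+1)).eval z)) := by
      intro z
      have hpz : p.eval z = q.eval z + c * (Φ (m+1)).eval z := by
        rw [hq]; simp
      rw [hpz, map_add, map_mul]
      ring
    simp_rw [heq]
    rw [integral_add (integrable_cont μ hμ _ (cont_pc (Φ n) q))
        ((integrable_cont μ hμ _ (cont_pc (Φ n) (Φ (m+1)))).const_mul _),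
      h1, integral_const_mul, h2, mul_zero, add_zero]

private lemma expand_sq (μ : Measure ℂ) [IsFiniteMeasure μ]
    (hμ : μ (Metric.sphere (0:ℂ) 1)ᶜ = 0) (p q : Polynomial ℂ) (c : ℂ) :
    (∫ z, ((p - Polynomial.C c * q).eval z) * conj ((p - Polynomial.C c * q).eval z) ∂μ)
      = (∫ z, p.eval z * conj (p.eval z) ∂μ)
        - conj c * (∫ z, p.eval z * conj (q.eval z) ∂μ)
        - c * (∫ z, q.eval z * conj (p.eval z) ∂μ)
        + (c * conj c) * (∫ z, q.eval z * conj (q.eval z) ∂μ) := by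
  have heq : ∀ z : ℂ, ((p - Polynomial.C c * q).eval z) * conj ((p - Polynomial.C c * q).eval z)
      = (p.eval z * conj (p.eval z)
          - conj c * (p.eval z * conj (q.eval z))
          - c * (q.eval z * conj (p.eval z)))
        + (c * conj c) * (q.eval z * conj (q.eval z)) := by
    intro z
    simp only [Polynomial.eval_sub, Polynomial.eval_mul, Polynomial.eval_C, map_sub, map_mul]
    ring
  simp_rw [heq]
  have c1 := cont_pc p p
  have c2 := cont_pc p q
  have c3 := cont_pc q p
  have c4 := cont_pc q q
  have iA : Integrable (fun z => p.eval z * conj (p.eval z)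
      - conj c * (p.eval z * conj (q.eval z)) - c * (q.eval z * conj (p.eval z))) μ :=
    integrable_cont μ hμ _ ((c1.sub (continuous_const.mul c2)).sub (continuous_const.mul c3))
  have iAB : Integrable (fun z => p.eval z * conj (p.eval z)
      - conj c * (p.eval z * conj (q.eval z))) μ :=
    integrable_cont μ hμ _ (c1.sub (continuous_const.mul c2))
  have iB : Integrable (fun z => (c * conj c) * (q.eval z * conj (q.eval z)) : ℂ → ℂ) μ :=
    integrable_cont μ hμ _ (continuous_const.mul c4)
  have iC : Integrable (fun z => c * (q.eval z * conj (p.eval z)) : ℂ → ℂ) μ :=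
    integrable_cont μ hμ _ (continuous_const.mul c3)
  have iD : Integrable (fun z => conj c * (p.eval z * conj (q.eval z)) : ℂ → ℂ) μ :=
    integrable_cont μ hμ _ (continuous_const.mul c2)
  have i1 := integrable_cont μ hμ _ c1
  rw [integral_add iA iB, integral_sub iAB iC, integral_sub i1 iD,
    integral_const_mul, integral_const_mul, integral_const_mul]

private lemma sphere_full (μ : Measure ℂ) [IsFiniteMeasure μ]
    (hμ : μ (Metric.sphere (0:ℂ) 1)ᶜ = 0) :
    μ (Metric.sphere (0:ℂ) 1) = μ Set.univ := by
  have := measure_add_measure_compl (μ := μ) (Metric.isClosed_sphere (x := (0:ℂ)) (ε := 1)).measurableSet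
  rw [hμ, add_zero] at this
  exact this

private lemma norm_le_m0 (μ : Measure ℂ) [IsFiniteMeasure μ]
    (hμ : μ (Metric.sphere (0:ℂ) 1)ᶜ = 0)
    (Φ : ℕ → Polynomial ℂ) (hmonic : ∀ n, (Φ n).Monic) (hdeg : ∀ n, (Φ n).natDegree = n)
    (hΦ0 : Φ 0 = 1)
    (horth : ∀ m n : ℕ, m ≠ n → (∫ z, (Φ n).eval z * conj ((Φ m).eval z) ∂μ) = 0) :
    ∀ n, (∫ z, ‖(Φ n).eval z‖^2 ∂μ) ≤ (μ (Metric.sphere (0:ℂ) 1)).toReal := by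
  have hm0 : (μ (Metric.sphere (0:ℂ) 1)).toReal = (μ Set.univ).toReal := by
    rw [sphere_full μ hμ]
  -- ∫ ‖(X^n).eval‖² = m₀
  have hXn : ∀ n : ℕ, (∫ z, ‖((Polynomial.X : Polynomial ℂ)^n).eval z‖^2 ∂μ)
      = (μ (Metric.sphere (0:ℂ) 1)).toReal := by
    intro n
    rw [hm0]
    have hae : ∀ᵐ z ∂μ, z ∈ Metric.sphere (0:ℂ) 1 := by
      rw [ae_iff]; simpa [Set.compl_def] using hμ
    have : ∀ᵐ z ∂μ, ‖((Polynomial.X : Polynomial ℂ)^n).eval z‖^2 = (1:ℝ) := by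
      filter_upwards [hae] with z hz
      have : ‖z‖ = 1 := by simpa using hz
      simp [norm_pow, this]
    rw [integral_congr_ae this]
    simp
    rfl
  intro n
  rcases Nat.eq_zero_or_pos n with hn | hn
  · rw [hn, hΦ0]
    refine le_of_eq ?_
    simpa using hXn 0
  · set r := (Polynomial.X : Polynomial ℂ)^n - Φ n with hr
    have hrdeg : r.natDegree ≤ n - 1 := by
      rw [Polynomial.natDegree_le_iff_coeff_eq_zero]
      intro k hk
      have hkn : n ≤ k := by omega
      rw [hr]
      simp only [Polynomial.coeff_sub, Polynomial.coeff_X_pow]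
      rcases eq_or_lt_of_le hkn with h | h
      · have h1 : (Φ n).coeff k = 1 := by
          rw [← h]
          have := (hmonic n).coeff_natDegree
          rwa [hdeg] at this
        rw [h1]
        simp [← h]
      · rw [Polynomial.coeff_eq_zero_of_natDegree_lt (by rw [hdeg]; exact h)]
        simp only [sub_zero, ite_eq_right_iff]
        omega
    have horthr : (∫ z, (Φ n).eval z * conj (r.eval z) ∂μ) = 0 :=
      orth_low μ hμ Φ hmonic hdeg hΦ0 horth (n-1) n (by omega) r hrdeg
    have horthr' : (∫ z, r.eval z * conj ((Φ n).eval z) ∂μ) = 0 := by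
      have : (∫ z, r.eval z * conj ((Φ n).eval z) ∂μ)
          = conj (∫ z, (Φ n).eval z * conj (r.eval z) ∂μ) := by
        rw [← integral_conj]
        apply integral_congr_ae
        filter_upwards with z
        simp [mul_comm]
      rw [this, horthr, map_zero]
    -- expand
    have hXr : (Polynomial.X : Polynomial ℂ)^n = Φ n + r := by rw [hr]; ring
    have hexp : ((∫ z, ‖((Polynomial.X : Polynomial ℂ)^n).eval z‖^2 ∂μ : ℝ) : ℂ)
        = ((∫ z, ‖(Φ n).eval z‖^2 ∂μ : ℝ) : ℂ) + ((∫ z, ‖r.eval z‖^2 ∂μ : ℝ) : ℂ) := by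
      rw [← self_inner, ← self_inner, ← self_inner]
      have heq : ∀ z : ℂ, ((Polynomial.X : Polynomial ℂ)^n).eval z
            * conj (((Polynomial.X : Polynomial ℂ)^n).eval z)
          = ((Φ n).eval z * conj ((Φ n).eval z) + r.eval z * conj (r.eval z))
            + ((Φ n).eval z * conj (r.eval z) + r.eval z * conj ((Φ n).eval z)) := by
        intro z
        have : ((Polynomial.X : Polynomial ℂ)^n).eval z = (Φ n).eval z + r.eval z := by
          rw [hXr]; simp
        rw [this, map_add]
        ring
      simp_rw [heq]
      have c1 := cont_pc (Φ n) (Φ n)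
      have c2 := cont_pc r r
      have c3 := cont_pc (Φ n) r
      have c4 := cont_pc r (Φ n)
      have iA : Integrable (fun z => (Φ n).eval z * conj ((Φ n).eval z)
          + r.eval z * conj (r.eval z)) μ := integrable_cont μ hμ _ (c1.add c2)
      have iB : Integrable (fun z => (Φ n).eval z * conj (r.eval z)
          + r.eval z * conj ((Φ n).eval z)) μ := integrable_cont μ hμ _ (c3.add c4)
      have i1 := integrable_cont μ hμ _ c1
      have i2 := integrable_cont μ hμ _ c2
      have i3 := integrable_cont μ hμ _ c3
      have i4 := integrable_cont μ hμ _ c4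
      rw [integral_add iA iB, integral_add i1 i2, integral_add i3 i4,
        horthr, horthr', add_zero, add_zero]
    have hexpR : (∫ z, ‖((Polynomial.X : Polynomial ℂ)^n).eval z‖^2 ∂μ)
        = (∫ z, ‖(Φ n).eval z‖^2 ∂μ) + (∫ z, ‖r.eval z‖^2 ∂μ) := by
      exact_mod_cast hexp
    have hrnn : 0 ≤ ∫ z, ‖r.eval z‖^2 ∂μ := integral_nonneg (fun z => by positivity)
    have := hXn n
    linarith [hexpR]

private lemma phit_bound (μ : Measure ℂ) [IsFiniteMeasure μ]
    (hμ : μ (Metric.sphere (0:ℂ) 1)ᶜ = 0)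
    (Φ : ℕ → Polynomial ℂ) (hmonic : ∀ n, (Φ n).Monic) (hdeg : ∀ n, (Φ n).natDegree = n)
    (hΦ0 : Φ 0 = 1)
    (horth : ∀ m n : ℕ, m ≠ n → (∫ z, (Φ n).eval z * conj ((Φ m).eval z) ∂μ) = 0)
    (a : ℕ → ℂ) (Φt : ℕ → Polynomial ℂ) (hΦt0 : Φt 0 = 1)
    (hΦt : ∀ n : ℕ, 1 ≤ n → Φt n = Φ n - Polynomial.C (a n) * Φ (n - 1)) :
    ∀ j, (∫ z, ‖(Φt j).eval z‖^2 ∂μ)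
      ≤ (1 + ‖a j‖^2) * (μ (Metric.sphere (0:ℂ) 1)).toReal := by
  have hm0nn : 0 ≤ (μ (Metric.sphere (0:ℂ) 1)).toReal := ENNReal.toReal_nonneg
  intro j
  rcases Nat.eq_zero_or_pos j with hj | hj
  · subst hj
    rw [hΦt0]
    have h1 : (∫ z, ‖(1:Polynomial ℂ).eval z‖^2 ∂μ) = (μ Set.univ).toReal := by simp; rfl
    rw [h1, ← sphere_full μ hμ]
    nlinarith [sq_nonneg ‖a 0‖, hm0nn]
  · have h := expand_sq μ hμ (Φ j) (Φ (j-1)) (a j)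
    rw [← hΦt j hj, horth (j-1) j (by omega), horth j (j-1) (by omega),
      mul_zero, mul_zero, sub_zero, sub_zero, self_inner, self_inner, self_inner,
      Complex.mul_conj'] at h
    have hre : (∫ z, ‖(Φt j).eval z‖^2 ∂μ)
        = (∫ z, ‖(Φ j).eval z‖^2 ∂μ) + ‖a j‖^2 * (∫ z, ‖(Φ (j-1)).eval z‖^2 ∂μ) := by
      have := congrArg Complex.re h
      simpa [← Complex.ofReal_pow] using this
    have b1 := norm_le_m0 μ hμ Φ hmonic hdeg hΦ0 horth j
    have b2 := norm_le_m0 μ hμ Φ hmonic hdeg hΦ0 horth (j-1)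
    have hnn : (0:ℝ) ≤ ‖a j‖^2 := sq_nonneg _
    nlinarith [hre]

/-- `L²(μ)`-norm bound for the CD kernel of `μ̃`:
`∫ |K_n(z,s,μ̃)|² dμ(s) ≤ m₀(μ) K_n(z,z,μ̃) Σ_{j=0}^n (1 + |a_j|²) k̃_j²`. -/
theorem stmt_14
    (μ μt : Measure ℂ) [IsFiniteMeasure μ] [IsFiniteMeasure μt]
    (hμsupp : μ (Metric.sphere (0 : ℂ) 1)ᶜ = 0)
    (hμtsupp : μt (Metric.sphere (0 : ℂ) 1)ᶜ = 0)
    (hμtnt : ∀ p : Polynomial ℂ, p ≠ 0 → 0 < ∫ z, ‖p.eval z‖ ^ 2 ∂μt)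
    (Φ : ℕ → Polynomial ℂ)
    (hmonic : ∀ n, (Φ n).Monic) (hdeg : ∀ n, (Φ n).natDegree = n)
    (hΦ0 : Φ 0 = 1)
    (horthμ : ∀ m n : ℕ, m ≠ n →
      (∫ z, (Φ n).eval z * conj ((Φ m).eval z) ∂μ) = 0)
    (a : ℕ → ℂ) (ha0 : a 0 = 0)
    (Φt : ℕ → Polynomial ℂ)
    (hΦt0 : Φt 0 = 1)
    (hΦt : ∀ n : ℕ, 1 ≤ n → Φt n = Φ n - Polynomial.C (a n) * Φ (n - 1))
    (horthμt : ∀ m n : ℕ, m ≠ n →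
      (∫ z, (Φt n).eval z * conj ((Φt m).eval z) ∂μt) = 0)
    (kt : ℕ → ℝ)
    (hkt : ∀ j : ℕ, kt j = (Real.sqrt (∫ z, ‖(Φt j).eval z‖ ^ 2 ∂μt))⁻¹)
    (φt : ℕ → ℂ → ℂ)
    (hφt : ∀ (j : ℕ) (z : ℂ), φt j z = (kt j : ℂ) * (Φt j).eval z)
    (K : ℕ → ℂ → ℂ → ℂ)
    (hK : ∀ (n : ℕ) (z w : ℂ),
      K n z w = ∑ j ∈ Finset.range (n + 1), conj (φt j w) * φt j z) :
    ∀ (n : ℕ) (z : ℂ),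
      (∫ s, ‖K n z s‖ ^ 2 ∂μ)
        ≤ (μ (Metric.sphere (0 : ℂ) 1)).toReal * (K n z z).re
            * ∑ j ∈ Finset.range (n + 1), (1 + ‖a j‖ ^ 2) * kt j ^ 2 := by
  intro n z
  set m0 : ℝ := (μ (Metric.sphere (0 : ℂ) 1)).toReal with hm0
  have hktnn : ∀ j, 0 ≤ kt j := fun j => by
    rw [hkt]; positivity
  set C0 : ℝ := ∑ j ∈ Finset.range (n+1), ‖φt j z‖^2 with hC0
  have hC0nn : 0 ≤ C0 := Finset.sum_nonneg fun j _ => sq_nonneg _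
  have hCS : ∀ s : ℂ, ‖K n z s‖^2 ≤ C0 * (∑ j ∈ Finset.range (n+1), ‖φt j s‖^2) := by
    intro s
    have h1 : ‖K n z s‖ ≤ ∑ j ∈ Finset.range (n+1), ‖φt j s‖ * ‖φt j z‖ := by
      rw [hK]
      refine (norm_sum_le _ _).trans (le_of_eq ?_)
      refine Finset.sum_congr rfl fun j _ => ?_
      rw [norm_mul, RCLike.norm_conj]
    calc ‖K n z s‖^2 ≤ (∑ j ∈ Finset.range (n+1), ‖φt j s‖ * ‖φt j z‖)^2 :=
          pow_le_pow_left₀ (norm_nonneg _) h1 2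
      _ ≤ (∑ j ∈ Finset.range (n+1), ‖φt j s‖^2) * (∑ j ∈ Finset.range (n+1), ‖φt j z‖^2) :=
          Finset.sum_mul_sq_le_sq_mul_sq _ _ _
      _ = C0 * (∑ j ∈ Finset.range (n+1), ‖φt j s‖^2) := mul_comm _ _
  have hKzz : (K n z z).re = C0 := by
    rw [hK, Complex.re_sum, hC0]
    refine Finset.sum_congr rfl fun j _ => ?_
    rw [mul_comm, Complex.mul_conj']
    simp [← Complex.ofReal_pow]
  -- integrability
  have hKc : Continuous (fun s => K n z s) := by
    have hfun : (fun s => K n z s)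
        = fun s => ∑ j ∈ Finset.range (n+1),
            conj ((kt j : ℂ) * (Φt j).eval s) * ((kt j : ℂ) * (Φt j).eval z) := by
      funext s
      rw [hK]
      simp_rw [hφt]
    rw [hfun]
    exact continuous_finset_sum _ fun j _ =>
      (RCLike.continuous_conj.comp (continuous_const.mul (Φt j).continuous)).mul continuous_const
  have hint1 : Integrable (fun s => ‖K n z s‖^2) μ :=
    integrable_cont μ hμsupp _ (hKc.norm.pow 2)
  have hgj : ∀ j, Continuous (fun s => ‖φt j s‖^2) := by
    intro j
    have hfun : (fun s => ‖φt j s‖^2) = fun s => ‖(kt j : ℂ) * (Φt j).eval s‖^2 := by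
      funext s; rw [hφt]
    rw [hfun]
    exact ((continuous_const.mul (Φt j).continuous).norm.pow 2)
  have hint2 : Integrable (fun s => C0 * ∑ j ∈ Finset.range (n+1), ‖φt j s‖^2) μ :=
    integrable_cont μ hμsupp _ (continuous_const.mul (continuous_finset_sum _ fun j _ => hgj j))
  have step1 : (∫ s, ‖K n z s‖^2 ∂μ)
      ≤ ∫ s, C0 * ∑ j ∈ Finset.range (n+1), ‖φt j s‖^2 ∂μ :=
    integral_mono hint1 hint2 hCS
  have step2 : (∫ s, C0 * ∑ j ∈ Finset.range (n+1), ‖φt j s‖^2 ∂μ)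
      = C0 * ∑ j ∈ Finset.range (n+1), ∫ s, ‖φt j s‖^2 ∂μ := by
    rw [integral_const_mul, integral_finset_sum _ fun j _ =>
      integrable_cont μ hμsupp _ (hgj j)]
  have step3 : ∀ j ∈ Finset.range (n+1),
      (∫ s, ‖φt j s‖^2 ∂μ) ≤ kt j^2 * ((1 + ‖a j‖^2) * m0) := by
    intro j _
    have hfun : (fun s => ‖φt j s‖^2) = fun s => kt j^2 * ‖(Φt j).eval s‖^2 := by
      funext s
      rw [hφt, norm_mul, mul_pow, Complex.norm_real, Real.norm_eq_abs, _root_.abs_of_nonneg (hktnn j)]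
    rw [hfun, integral_const_mul]
    exact mul_le_mul_of_nonneg_left
      (phit_bound μ hμsupp Φ hmonic hdeg hΦ0 horthμ a Φt hΦt0 hΦt j) (sq_nonneg _)
  have hsum : ∑ j ∈ Finset.range (n+1), kt j^2 * ((1 + ‖a j‖^2) * m0)
      = m0 * ∑ j ∈ Finset.range (n+1), (1 + ‖a j‖^2) * kt j^2 := by
    rw [Finset.mul_sum]
    exact Finset.sum_congr rfl fun j _ => by ring
  calc (∫ s, ‖K n z s‖^2 ∂μ)
      ≤ C0 * ∑ j ∈ Finset.range (n+1), ∫ s, ‖φt j s‖^2 ∂μ := step1.trans (le_of_eq step2)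
    _ ≤ C0 * ∑ j ∈ Finset.range (n+1), kt j^2 * ((1 + ‖a j‖^2) * m0) :=
        mul_le_mul_of_nonneg_left (Finset.sum_le_sum step3) hC0nn
    _ = m0 * (K n z z).re * ∑ j ∈ Finset.range (n+1), (1 + ‖a j‖^2) * kt j^2 := by
        rw [hsum, hKzz]; ring
end

section
/- Let μ and μ̃ be nontrivial finite positive Borel measures on the unit circle. Let {Φ_n} be a monic orthogonal polynomial sequence for μ with Φ_0 = 1, let a_n ∈ ℂ with a_0 = 0, and suppose Φ̃_0 = 1, Φ̃_n = Φ_n − a_nΦ_{n−1} (n ≥ 1) is a monic orthogonal polynomial sequence for μ̃. Put φ_j = Φ_j/‖Φ_j‖_μ, φ̃_j = Φ̃_j/‖Φ̃_j‖_{μ̃}, k̃_j = ‖Φ̃_j‖_{μ̃}^{−1}, K_n(z,w,μ) = Σ_{j=0}^n conj(φ_j(w))·φ_j(z), and K_n(z,w,μ̃) = Σ_{j=0}^n conj(φ̃_j(w))·φ̃_j(z). Then for every n ≥ 0 and all z, w ∈ ℂ: |K_n(z,w,μ) − K_n(z,w,μ̃)|² ≤ K_n(w,w,μ)·[ K_n(z,z,μ)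 − K_n(z,z,μ̃)·( 2 − m₀(μ)·Σ_{j=0}^{n} k̃_j²·(1 + |a_j|²) ) ], where m₀(μ) = μ(∂𝔻). -/
open MeasureTheory Complex ComplexConjugate

section LubinskyAux

open Polynomial

lemma aux_ae_sphere (μ : Measure ℂ) (hsupp : μ (Metric.sphere (0:ℂ) 1)ᶜ = 0) :
    ∀ᵐ x ∂μ, x ∈ Metric.sphere (0:ℂ) 1 := by
  rw [ae_iff]; convert hsupp using 2; rfl

lemma aux_integrable {E : Type*} [NormedAddCommGroup E] (μ : Measure ℂ) [IsFiniteMeasure μ]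
    (hsupp : μ (Metric.sphere (0:ℂ) 1)ᶜ = 0) (f : ℂ → E) (hf : Continuous f) :
    Integrable f μ := by
  obtain ⟨C, hC⟩ := (isCompact_sphere (0:ℂ) 1).exists_bound_of_continuousOn hf.continuousOn
  refine ⟨hf.aestronglyMeasurable, ?_⟩
  exact HasFiniteIntegral.of_bounded (C := C)
    ((aux_ae_sphere μ hsupp).mono fun x hx => hC x hx)

lemma aux_conj_cont (q : Polynomial ℂ) : Continuous fun z => conj (q.eval z) :=
  Complex.continuous_conj.comp q.continuous

lemma aux_conv (μ : Measure ℂ) (p : Polynomial ℂ) :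
    ∫ z, p.eval z * conj (p.eval z) ∂μ = ((∫ z, ‖p.eval z‖^2 ∂μ : ℝ) : ℂ) := by
  have h : ∫ z, ((‖p.eval z‖^2 : ℝ) : ℂ) ∂μ = ((∫ z, ‖p.eval z‖^2 ∂μ : ℝ) : ℂ) := integral_ofReal
  rw [← h]
  congr 1
  funext z
  rw [Complex.mul_conj]
  norm_cast
  simp [Complex.normSq_eq_norm_sq]

lemma aux_rep (Φ : ℕ → Polynomial ℂ) (hmonic : ∀ n, (Φ n).Monic)
    (hdeg : ∀ n, (Φ n).natDegree = n) :
    ∀ m (p : Polynomial ℂ), p.natDegree ≤ m →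
      ∃ b : ℕ → ℂ, p = ∑ j ∈ Finset.range (m+1), Polynomial.C (b j) * Φ j := by
  intro m
  induction m with
  | zero =>
    intro p hp
    have hΦ0 : Φ 0 = 1 := (hmonic 0).natDegree_eq_zero.mp (hdeg 0)
    refine ⟨fun _ => p.coeff 0, ?_⟩
    simp [hΦ0, (Polynomial.eq_C_of_natDegree_le_zero hp).symm]
  | succ m ih =>
    intro p hp
    set q := p - Polynomial.C (p.coeff (m+1)) * Φ (m+1) with hq
    have hqd : q.natDegree ≤ m := by
      rw [Polynomial.natDegree_le_iff_coeff_eq_zero]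
      intro k hk
      have h1 : (Φ (m+1)).coeff (m+1) = 1 := by
        have := (hmonic (m+1)).coeff_natDegree
        rwa [hdeg] at this
      rcases eq_or_lt_of_le (Nat.succ_le_of_lt hk) with h | h
      · simp [hq, ← h, h1, Polynomial.coeff_C_mul]
      · have h2 : p.coeff k = 0 := Polynomial.coeff_eq_zero_of_natDegree_lt (lt_of_le_of_lt hp h)
        have h3 : (Φ (m+1)).coeff k = 0 := by
          apply Polynomial.coeff_eq_zero_of_natDegree_lt
          rw [hdeg]; exact h
        simp [hq, h2, h3, Polynomial.coeff_C_mul]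
    obtain ⟨b, hb⟩ := ih q hqd
    refine ⟨fun j => if j = m+1 then p.coeff (m+1) else b j, ?_⟩
    rw [Finset.sum_range_succ]
    have : ∑ j ∈ Finset.range (m+1), Polynomial.C (if j = m+1 then p.coeff (m+1) else b j) * Φ j
        = ∑ j ∈ Finset.range (m+1), Polynomial.C (b j) * Φ j := by
      apply Finset.sum_congr rfl
      intro j hj
      rw [Finset.mem_range] at hj
      simp [Nat.ne_of_lt hj]
    rw [this, ← hb]
    simp [hq]

lemma aux_orth (μ : Measure ℂ) [IsFiniteMeasure μ]
    (hsupp : μ (Metric.sphere (0:ℂ) 1)ᶜ = 0)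
    (Φ : ℕ → Polynomial ℂ) (hmonic : ∀ n, (Φ n).Monic)
    (hdeg : ∀ n, (Φ n).natDegree = n)
    (horth : ∀ m n, m ≠ n → (∫ z, (Φ n).eval z * conj ((Φ m).eval z) ∂μ) = 0) :
    ∀ (n : ℕ) (p : Polynomial ℂ), p.natDegree < n →
      (∫ z, (Φ n).eval z * conj (p.eval z) ∂μ) = 0 := by
  intro n p hpn
  obtain ⟨m, rfl⟩ : ∃ m, n = m + 1 := ⟨n - 1, by omega⟩
  obtain ⟨b, hb⟩ := aux_rep Φ hmonic hdeg m p (by omega)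
  have hev : ∀ z : ℂ, (Φ (m+1)).eval z * conj (p.eval z)
      = ∑ j ∈ Finset.range (m+1), conj (b j) * ((Φ (m+1)).eval z * conj ((Φ j).eval z)) := by
    intro z
    rw [hb]
    simp only [Polynomial.eval_finset_sum, Polynomial.eval_mul, Polynomial.eval_C, map_sum,
      map_mul, Finset.mul_sum]
    apply Finset.sum_congr rfl
    intro j _
    ring
  calc ∫ z, (Φ (m+1)).eval z * conj (p.eval z) ∂μ
      = ∫ z, ∑ j ∈ Finset.range (m+1), conj (b j) * ((Φ (m+1)).eval z * conj ((Φ j).eval z)) ∂μ := by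
        exact integral_congr_ae (Filter.Eventually.of_forall hev)
    _ = ∑ j ∈ Finset.range (m+1), ∫ z, conj (b j) * ((Φ (m+1)).eval z * conj ((Φ j).eval z)) ∂μ := by
        apply integral_finset_sum
        intro j _
        apply aux_integrable μ hsupp
        exact continuous_const.mul ((Φ (m+1)).continuous.mul (aux_conj_cont (Φ j)))
    _ = 0 := by
        apply Finset.sum_eq_zero
        intro j hj
        rw [Finset.mem_range] at hj
        rw [integral_const_mul _ _, horth j (m+1) (by omega), mul_zero]

lemma aux_norm_le (μ : Measure ℂ) [IsFiniteMeasure μ]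
    (hsupp : μ (Metric.sphere (0:ℂ) 1)ᶜ = 0)
    (Φ : ℕ → Polynomial ℂ) (hmonic : ∀ n, (Φ n).Monic)
    (hdeg : ∀ n, (Φ n).natDegree = n)
    (horth : ∀ m n, m ≠ n → (∫ z, (Φ n).eval z * conj ((Φ m).eval z) ∂μ) = 0) :
    ∀ n, ∫ z, ‖(Φ n).eval z‖^2 ∂μ ≤ (μ (Metric.sphere (0:ℂ) 1)).toReal := by
  have intg : ∀ f : ℂ → ℂ, Continuous f → Integrable f μ := fun f hf => aux_integrable μ hsupp f hf
  have base : ∫ z, ‖(Φ 0).eval z‖^2 ∂μ = (μ (Metric.sphere (0:ℂ) 1)).toReal := by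
    have hΦ0 : Φ 0 = 1 := (hmonic 0).natDegree_eq_zero.mp (hdeg 0)
    have huniv : μ Set.univ = μ (Metric.sphere (0:ℂ) 1) := by
      rw [← measure_add_measure_compl (Metric.isClosed_sphere.measurableSet), hsupp, add_zero]
    simp [hΦ0, ← huniv, measureReal_def]
  have step : ∀ k, ∫ z, ‖(Φ (k+1)).eval z‖^2 ∂μ ≤ ∫ z, ‖(Φ k).eval z‖^2 ∂μ := by
    intro k
    set r := Polynomial.X * Φ k - Φ (k+1) with hrdef
    have hrd : r.natDegree < k + 1 := by
      have : r.natDegree ≤ k := by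
        rw [Polynomial.natDegree_le_iff_coeff_eq_zero]
        intro t ht
        obtain ⟨s, rfl⟩ : ∃ s, t = s + 1 := ⟨t - 1, by omega⟩
        have h1 : (Polynomial.X * Φ k).coeff (s+1) = (Φ k).coeff s := Polynomial.coeff_X_mul _ _
        rcases eq_or_lt_of_le (Nat.succ_le_of_lt ht) with h | h
        · have hk1 : (Φ (k+1)).coeff (k+1) = 1 := by
            have := (hmonic (k+1)).coeff_natDegree; rwa [hdeg] at this
          have hk2 : (Φ k).coeff k = 1 := by
            have := (hmonic k).coeff_natDegree; rwa [hdeg] at this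
          have hs : s = k := by omega
          simp [hrdef, Polynomial.coeff_sub, h1, hs, ← h, hk1, hk2]
        · have h2 : (Φ k).coeff s = 0 := by
            apply Polynomial.coeff_eq_zero_of_natDegree_lt; rw [hdeg]; omega
          have h3 : (Φ (k+1)).coeff (s+1) = 0 := by
            apply Polynomial.coeff_eq_zero_of_natDegree_lt; rw [hdeg]; omega
          simp [hrdef, Polynomial.coeff_sub, h1, h2, h3]
      omega
    have hcross1 : ∫ z, (Φ (k+1)).eval z * conj (r.eval z) ∂μ = 0 :=
      aux_orth μ hsupp Φ hmonic hdeg horth (k+1) r hrd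
    have hcross2 : ∫ z, r.eval z * conj ((Φ (k+1)).eval z) ∂μ = 0 := by
      have : (fun z => r.eval z * conj ((Φ (k+1)).eval z))
          = fun z => conj ((Φ (k+1)).eval z * conj (r.eval z)) := by
        funext z; simp [mul_comm]
      rw [this, integral_conj, hcross1, map_zero]
    have hXΦ : Polynomial.X * Φ k = Φ (k+1) + r := by rw [hrdef]; ring
    have hexp : ∫ z, (Polynomial.X * Φ k).eval z * conj ((Polynomial.X * Φ k).eval z) ∂μ
        = (∫ z, (Φ (k+1)).eval z * conj ((Φ (k+1)).eval z) ∂μ)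
          + ∫ z, r.eval z * conj (r.eval z) ∂μ := by
      rw [hXΦ]
      have hev : ∀ z : ℂ, (Φ (k+1) + r).eval z * conj ((Φ (k+1) + r).eval z)
          = (Φ (k+1)).eval z * conj ((Φ (k+1)).eval z) + ((Φ (k+1)).eval z * conj (r.eval z)
            + (r.eval z * conj ((Φ (k+1)).eval z) + r.eval z * conj (r.eval z))) := by
        intro z; simp only [Polynomial.eval_add, map_add]; ring
      have iA : Integrable (fun z => (Φ (k+1)).eval z * conj ((Φ (k+1)).eval z)) μ :=
        intg _ ((Φ (k+1)).continuous.mul (aux_conj_cont _))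
      have iB : Integrable (fun z => (Φ (k+1)).eval z * conj (r.eval z)) μ :=
        intg _ ((Φ (k+1)).continuous.mul (aux_conj_cont _))
      have iC : Integrable (fun z => r.eval z * conj ((Φ (k+1)).eval z)) μ :=
        intg _ (r.continuous.mul (aux_conj_cont _))
      have iD : Integrable (fun z => r.eval z * conj (r.eval z)) μ :=
        intg _ (r.continuous.mul (aux_conj_cont _))
      calc ∫ z, (Φ (k+1) + r).eval z * conj ((Φ (k+1) + r).eval z) ∂μ
          = ∫ z, ((Φ (k+1)).eval z * conj ((Φ (k+1)).eval z) + ((Φ (k+1)).eval z * conj (r.eval z)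
            + (r.eval z * conj ((Φ (k+1)).eval z) + r.eval z * conj (r.eval z)))) ∂μ :=
            integral_congr_ae (Filter.Eventually.of_forall hev)
        _ = (∫ z, (Φ (k+1)).eval z * conj ((Φ (k+1)).eval z) ∂μ)
            + ∫ z, ((Φ (k+1)).eval z * conj (r.eval z)
              + (r.eval z * conj ((Φ (k+1)).eval z) + r.eval z * conj (r.eval z))) ∂μ :=
            integral_add iA (iB.add (iC.add iD))
        _ = (∫ z, (Φ (k+1)).eval z * conj ((Φ (k+1)).eval z) ∂μ)
            + ((∫ z, (Φ (k+1)).eval z * conj (r.eval z) ∂μ)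
              + ∫ z, (r.eval z * conj ((Φ (k+1)).eval z) + r.eval z * conj (r.eval z)) ∂μ) := by
            congr 1; exact integral_add iB (iC.add iD)
        _ = (∫ z, (Φ (k+1)).eval z * conj ((Φ (k+1)).eval z) ∂μ)
            + ((∫ z, (Φ (k+1)).eval z * conj (r.eval z) ∂μ)
              + ((∫ z, r.eval z * conj ((Φ (k+1)).eval z) ∂μ)
                + ∫ z, r.eval z * conj (r.eval z) ∂μ)) := by
            congr 2; exact integral_add iC iD
        _ = (∫ z, (Φ (k+1)).eval z * conj ((Φ (k+1)).eval z) ∂μ)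
            + ∫ z, r.eval z * conj (r.eval z) ∂μ := by
            rw [hcross1, hcross2]; ring
    have hlhs : ∫ z, (Polynomial.X * Φ k).eval z * conj ((Polynomial.X * Φ k).eval z) ∂μ
        = ∫ z, (Φ k).eval z * conj ((Φ k).eval z) ∂μ := by
      apply integral_congr_ae
      filter_upwards [aux_ae_sphere μ hsupp] with z hz
      have hz1 : z * conj z = 1 := by
        rw [Complex.mul_conj]
        norm_cast
        rw [Complex.normSq_eq_norm_sq]
        simp only [mem_sphere_iff_norm, sub_zero] at hz
        rw [hz]; norm_num
      simp only [Polynomial.eval_mul, Polynomial.eval_X, map_mul]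
      calc z * (Φ k).eval z * (conj z * conj ((Φ k).eval z))
          = (z * conj z) * ((Φ k).eval z * conj ((Φ k).eval z)) := by ring
        _ = (Φ k).eval z * conj ((Φ k).eval z) := by rw [hz1, one_mul]
    rw [hlhs] at hexp
    rw [aux_conv, aux_conv, aux_conv] at hexp
    have hreal : ∫ z, ‖(Φ k).eval z‖^2 ∂μ
        = (∫ z, ‖(Φ (k+1)).eval z‖^2 ∂μ) + ∫ z, ‖r.eval z‖^2 ∂μ := by
      exact_mod_cast hexp
    have hr0 : 0 ≤ ∫ z, ‖r.eval z‖^2 ∂μ := integral_nonneg fun z => by positivity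
    linarith
  intro n
  induction n with
  | zero => exact le_of_eq base
  | succ k ih => exact le_trans (step k) ih

lemma aux_cs_sqrt (t : Finset ℕ) (x y : ℕ → ℝ) (hx : ∀ i, 0 ≤ x i) (hy : ∀ i, 0 ≤ y i) :
    ∑ i ∈ t, x i * y i ≤ Real.sqrt (∑ i ∈ t, x i ^ 2) * Real.sqrt (∑ i ∈ t, y i ^ 2) := by
  have h0 : 0 ≤ ∑ i ∈ t, x i * y i :=
    Finset.sum_nonneg fun i _ => mul_nonneg (hx i) (hy i)
  calc ∑ i ∈ t, x i * y i = Real.sqrt ((∑ i ∈ t, x i * y i) ^ 2) := (Real.sqrt_sq h0).symm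
    _ ≤ Real.sqrt ((∑ i ∈ t, x i ^ 2) * ∑ i ∈ t, y i ^ 2) :=
        Real.sqrt_le_sqrt (Finset.sum_mul_sq_le_sq_mul_sq t x y)
    _ = _ := Real.sqrt_mul (Finset.sum_nonneg fun i _ => sq_nonneg _) _

lemma aux_mink (s t : Finset ℕ) (g : ℕ → ℝ) (Wf : ℕ → ℕ → ℝ)
    (hg : ∀ j, 0 ≤ g j) (hW : ∀ j i, 0 ≤ Wf j i) :
    ∑ i ∈ t, (∑ j ∈ s, g j * Wf j i) ^ 2
      ≤ (∑ j ∈ s, g j * Real.sqrt (∑ i ∈ t, Wf j i ^ 2)) ^ 2 := by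
  calc ∑ i ∈ t, (∑ j ∈ s, g j * Wf j i) ^ 2
      = ∑ i ∈ t, ∑ j ∈ s, ∑ k ∈ s, (g j * g k) * (Wf j i * Wf k i) := by
        refine Finset.sum_congr rfl fun i _ => ?_
        rw [sq, Finset.sum_mul_sum]
        exact Finset.sum_congr rfl fun j _ => Finset.sum_congr rfl fun k _ => by ring
    _ = ∑ j ∈ s, ∑ k ∈ s, ∑ i ∈ t, (g j * g k) * (Wf j i * Wf k i) := by
        rw [Finset.sum_comm]
        exact Finset.sum_congr rfl fun j _ => Finset.sum_comm ..
    _ = ∑ j ∈ s, ∑ k ∈ s, (g j * g k) * ∑ i ∈ t, Wf j i * Wf k i := by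
        simp_rw [← Finset.mul_sum]
    _ ≤ ∑ j ∈ s, ∑ k ∈ s, (g j * g k) *
          (Real.sqrt (∑ i ∈ t, Wf j i ^ 2) * Real.sqrt (∑ i ∈ t, Wf k i ^ 2)) := by
        refine Finset.sum_le_sum fun j _ => Finset.sum_le_sum fun k _ => ?_
        exact mul_le_mul_of_nonneg_left (aux_cs_sqrt t (Wf j) (Wf k) (hW j) (hW k))
          (mul_nonneg (hg j) (hg k))
    _ = (∑ j ∈ s, g j * Real.sqrt (∑ i ∈ t, Wf j i ^ 2)) ^ 2 := by
        rw [sq, Finset.sum_mul_sum]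
        exact Finset.sum_congr rfl fun j _ => Finset.sum_congr rfl fun k _ => by ring

lemma aux_re_sum_diag (s : Finset ℕ) (f : ℕ → ℂ) :
    (∑ j ∈ s, conj (f j) * f j).re = ∑ j ∈ s, ‖f j‖ ^ 2 := by
  rw [Complex.re_sum]
  refine Finset.sum_congr rfl fun j _ => ?_
  rw [mul_comm, Complex.mul_conj, Complex.ofReal_re, Complex.normSq_eq_norm_sq]

end LubinskyAux

/-- Lubinsky-type inequality without ordering of the measures:
`|K_n(z,w,μ) - K_n(z,w,μ̃)|² ≤ K_n(w,w,μ) [K_n(z,z,μ) - K_n(z,z,μ̃)(2 - m₀(μ) Σ k̃_j²(1+|a_j|²))]`. -/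
theorem stmt_15
    (μ μt : Measure ℂ) [IsFiniteMeasure μ] [IsFiniteMeasure μt]
    (hμsupp : μ (Metric.sphere (0 : ℂ) 1)ᶜ = 0)
    (hμtsupp : μt (Metric.sphere (0 : ℂ) 1)ᶜ = 0)
    (hμnt : ∀ p : Polynomial ℂ, p ≠ 0 → 0 < ∫ z, ‖p.eval z‖ ^ 2 ∂μ)
    (hμtnt : ∀ p : Polynomial ℂ, p ≠ 0 → 0 < ∫ z, ‖p.eval z‖ ^ 2 ∂μt)
    (Φ : ℕ → Polynomial ℂ)
    (hmonic : ∀ n, (Φ n).Monic) (hdeg : ∀ n, (Φ n).natDegree = n)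
    (hΦ0 : Φ 0 = 1)
    (horthμ : ∀ m n : ℕ, m ≠ n →
      (∫ z, (Φ n).eval z * conj ((Φ m).eval z) ∂μ) = 0)
    (a : ℕ → ℂ) (ha0 : a 0 = 0)
    (Φt : ℕ → Polynomial ℂ)
    (hΦt0 : Φt 0 = 1)
    (hΦt : ∀ n : ℕ, 1 ≤ n → Φt n = Φ n - Polynomial.C (a n) * Φ (n - 1))
    (horthμt : ∀ m n : ℕ, m ≠ n →
      (∫ z, (Φt n).eval z * conj ((Φt m).eval z) ∂μt) = 0)
    (φ : ℕ → ℂ → ℂ)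
    (hφ : ∀ (j : ℕ) (z : ℂ),
      φ j z = ((Real.sqrt (∫ s, ‖(Φ j).eval s‖ ^ 2 ∂μ))⁻¹ : ℂ) * (Φ j).eval z)
    (kt : ℕ → ℝ)
    (hkt : ∀ j : ℕ, kt j = (Real.sqrt (∫ z, ‖(Φt j).eval z‖ ^ 2 ∂μt))⁻¹)
    (φt : ℕ → ℂ → ℂ)
    (hφt : ∀ (j : ℕ) (z : ℂ), φt j z = (kt j : ℂ) * (Φt j).eval z)
    (Kμ Kμt : ℕ → ℂ → ℂ → ℂ)
    (hKμ : ∀ (n : ℕ) (z w : ℂ),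
      Kμ n z w = ∑ j ∈ Finset.range (n + 1), conj (φ j w) * φ j z)
    (hKμt : ∀ (n : ℕ) (z w : ℂ),
      Kμt n z w = ∑ j ∈ Finset.range (n + 1), conj (φt j w) * φt j z) :
    ∀ (n : ℕ) (z w : ℂ),
      ‖Kμ n z w - Kμt n z w‖ ^ 2
        ≤ (Kμ n w w).re *
            ((Kμ n z z).re - (Kμt n z z).re *
              (2 - (μ (Metric.sphere (0 : ℂ) 1)).toReal *
                ∑ j ∈ Finset.range (n + 1), kt j ^ 2 * (1 + ‖a j‖ ^ 2))) := by
  intro n z w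
  have hIpos : ∀ j : ℕ, 0 < ∫ s, ‖(Φ j).eval s‖ ^ 2 ∂μ := fun j => hμnt _ (hmonic j).ne_zero
  set nrm : ℕ → ℝ := fun j => Real.sqrt (∫ s, ‖(Φ j).eval s‖ ^ 2 ∂μ) with hnrmdef
  have hφ' : ∀ (j : ℕ) (x : ℂ), φ j x = (((nrm j : ℝ) : ℂ))⁻¹ * (Φ j).eval x := fun j x => hφ j x
  have hnrm_pos : ∀ j, 0 < nrm j := fun j => Real.sqrt_pos.mpr (hIpos j)
  have hnrmne : ∀ i, ((nrm i : ℝ) : ℂ) ≠ 0 := fun i => Complex.ofReal_ne_zero.mpr (hnrm_pos i).ne'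
  set m0 : ℝ := (μ (Metric.sphere (0 : ℂ) 1)).toReal with hm0def
  have hm00 : 0 ≤ m0 := ENNReal.toReal_nonneg
  have hnrm_le : ∀ j, nrm j ^ 2 ≤ m0 := by
    intro j
    have : nrm j ^ 2 = ∫ s, ‖(Φ j).eval s‖ ^ 2 ∂μ := Real.sq_sqrt (hIpos j).le
    rw [this]
    exact aux_norm_le μ hμsupp Φ hmonic hdeg horthμ j
  have hkt0 : ∀ j, 0 ≤ kt j := fun j => by rw [hkt]; positivity
  set c : ℕ → ℂ := fun j => ((kt j : ℂ)) * ((nrm j : ℝ) : ℂ) with hcdef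
  set d : ℕ → ℂ := fun j => ((kt j : ℂ)) * a j * ((nrm (j - 1) : ℝ) : ℂ) with hddef
  have hd0 : d 0 = 0 := by simp [hddef, ha0]
  -- pointwise formula for φt in terms of φ
  have hpt : ∀ (j : ℕ) (x : ℂ), φt j x = c j * φ j x - d j * φ (j - 1) x := by
    intro j x
    match j with
    | 0 =>
      have h0 : φ 0 x = (((nrm 0 : ℝ) : ℂ))⁻¹ := by
        rw [hφ' 0 x, hΦ0]; simp
      rw [hφt, hΦt0, hd0]
      show (kt 0 : ℂ) * Polynomial.eval x 1 = c 0 * φ 0 x - 0 * φ (0 - 1) x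
      rw [h0, Polynomial.eval_one, mul_one, zero_mul, sub_zero, hcdef]
      rw [mul_assoc, mul_inv_cancel₀ (hnrmne 0), mul_one]
    | (k+1) =>
      rw [hφt, hΦt (k+1) (by omega)]
      simp only [Polynomial.eval_sub, Polynomial.eval_mul, Polynomial.eval_C,
        Nat.add_sub_cancel]
      rw [hφ' (k+1) x, hφ' k x]
      simp only [hcdef, hddef, Nat.add_sub_cancel]
      have inv1 : ((nrm (k+1) : ℝ) : ℂ) * (((nrm (k+1) : ℝ) : ℂ))⁻¹ = 1 :=
        mul_inv_cancel₀ (hnrmne (k+1))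
      have inv2 : ((nrm k : ℝ) : ℂ) * (((nrm k : ℝ) : ℂ))⁻¹ = 1 :=
        mul_inv_cancel₀ (hnrmne k)
      linear_combination (-((kt (k+1) : ℂ) * Polynomial.eval x (Φ (k+1)))) * inv1
        + ((kt (k+1) : ℂ) * a (k+1) * Polynomial.eval x (Φ k)) * inv2
  -- the coefficient vectors
  set g : ℕ → ℂ := fun j => conj (φt j z) with hgdef
  set Wc : ℕ → ℕ → ℂ :=
    fun j i => (if i = j then c j else 0) - (if i + 1 = j then d j else 0) with hWcdef
  set E : ℕ → ℂ := fun i => ∑ j ∈ Finset.range (n + 1), g j * Wc j i with hEdef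
  set F : ℕ → ℂ := fun i => conj (φ i z) - E i with hFdef
  -- (K1)
  have hW1 : ∀ j, j ≤ n → ∀ x : ℂ,
      (∑ i ∈ Finset.range (n + 1), Wc j i * φ i x) = φt j x := by
    intro j hj x
    have hsplit : ∀ i, Wc j i * φ i x
        = (if i = j then c j * φ i x else 0) - (if i + 1 = j then d j * φ i x else 0) := by
      intro i
      by_cases h1 : i = j <;> by_cases h2 : i + 1 = j <;>
        simp [hWcdef, h1, h2, sub_mul]
    rw [Finset.sum_congr rfl (fun i _ => hsplit i), Finset.sum_sub_distrib]
    have hfirst : (∑ i ∈ Finset.range (n + 1), if i = j then c j * φ i x else 0)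
        = c j * φ j x := by
      rw [Finset.sum_ite_eq' (Finset.range (n + 1)) j (fun i => c j * φ i x)]
      simp [Finset.mem_range, Nat.lt_succ_of_le hj]
    have hsecond : (∑ i ∈ Finset.range (n + 1), if i + 1 = j then d j * φ i x else 0)
        = d j * φ (j - 1) x := by
      rcases j with _ | k
      · simp [hd0]
      · calc (∑ i ∈ Finset.range (n + 1), if i + 1 = k + 1 then d (k+1) * φ i x else 0)
            = ∑ i ∈ Finset.range (n + 1), if i = k then d (k+1) * φ i x else 0 :=
              Finset.sum_congr rfl fun i _ => by
                rw [if_congr (by omega : (i + 1 = k + 1) ↔ (i = k)) rfl rfl]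
          _ = d (k+1) * φ k x := by
              rw [Finset.sum_ite_eq' (Finset.range (n + 1)) k (fun i => d (k+1) * φ i x),
                if_pos (Finset.mem_range.mpr (by omega : k < n + 1))]
          _ = d (k+1) * φ ((k+1) - 1) x := by norm_num
    rw [hfirst, hsecond, ← hpt j x]
  -- swap sums
  have hsum_swap : ∀ x : ℂ, (∑ i ∈ Finset.range (n + 1), E i * φ i x)
      = ∑ j ∈ Finset.range (n + 1), g j * φt j x := by
    intro x
    calc ∑ i ∈ Finset.range (n + 1), E i * φ i x
        = ∑ i ∈ Finset.range (n + 1), ∑ j ∈ Finset.range (n + 1), g j * (Wc j i * φ i x) := by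
          refine Finset.sum_congr rfl fun i _ => ?_
          simp only [hEdef]
          rw [Finset.sum_mul]
          exact Finset.sum_congr rfl fun j _ => by ring
      _ = ∑ j ∈ Finset.range (n + 1), ∑ i ∈ Finset.range (n + 1), g j * (Wc j i * φ i x) :=
          Finset.sum_comm
      _ = ∑ j ∈ Finset.range (n + 1), g j * φt j x := by
          refine Finset.sum_congr rfl fun j hj => ?_
          rw [← Finset.mul_sum, hW1 j (by rw [Finset.mem_range] at hj; omega) x]
  -- (K2)
  have hK2 : conj (Kμ n z w - Kμt n z w) = ∑ i ∈ Finset.range (n + 1), F i * φ i w := by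
    have h1 : ∑ i ∈ Finset.range (n + 1), F i * φ i w
        = (∑ i ∈ Finset.range (n + 1), conj (φ i z) * φ i w)
          - ∑ j ∈ Finset.range (n + 1), g j * φt j w := by
      rw [← hsum_swap w, ← Finset.sum_sub_distrib]
      exact Finset.sum_congr rfl fun i _ => by simp only [hFdef]; ring
    rw [h1, hKμ, hKμt, map_sub, map_sum, map_sum]
    congr 1
    · exact Finset.sum_congr rfl fun i _ => by
        rw [map_mul, Complex.conj_conj]; ring
    · exact Finset.sum_congr rfl fun j _ => by
        simp only [hgdef]; rw [map_mul, Complex.conj_conj]; ring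
  -- diagonal real parts
  have hZre : (Kμ n z z).re = ∑ i ∈ Finset.range (n + 1), ‖φ i z‖ ^ 2 := by
    rw [hKμ]; exact aux_re_sum_diag _ _
  have hZtre : (Kμt n z z).re = ∑ j ∈ Finset.range (n + 1), ‖φt j z‖ ^ 2 := by
    rw [hKμt]; exact aux_re_sum_diag _ _
  have hWre : (Kμ n w w).re = ∑ i ∈ Finset.range (n + 1), ‖φ i w‖ ^ 2 := by
    rw [hKμ]; exact aux_re_sum_diag _ _
  -- (K3)
  have hEreal : (∑ i ∈ Finset.range (n + 1), (conj (φ i z) * conj (E i)).re)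
      = ∑ j ∈ Finset.range (n + 1), ‖φt j z‖ ^ 2 := by
    have h1 : ∑ i ∈ Finset.range (n + 1), conj (φ i z) * conj (E i)
        = conj (∑ i ∈ Finset.range (n + 1), φ i z * E i) := by
      rw [map_sum]; exact Finset.sum_congr rfl fun i _ => (map_mul _ _ _).symm
    have h2 : ∑ i ∈ Finset.range (n + 1), φ i z * E i
        = ∑ j ∈ Finset.range (n + 1), conj (φt j z) * φt j z := by
      rw [show ∑ i ∈ Finset.range (n + 1), φ i z * E i
          = ∑ i ∈ Finset.range (n + 1), E i * φ i z from
          Finset.sum_congr rfl fun i _ => mul_comm _ _, hsum_swap z]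
    rw [← Complex.re_sum, h1, Complex.conj_re, h2]
    exact aux_re_sum_diag _ _
  have hK3 : ∑ i ∈ Finset.range (n + 1), ‖F i‖ ^ 2
      = (∑ i ∈ Finset.range (n + 1), ‖φ i z‖ ^ 2)
        - 2 * (∑ j ∈ Finset.range (n + 1), ‖φt j z‖ ^ 2)
        + ∑ i ∈ Finset.range (n + 1), ‖E i‖ ^ 2 := by
    have key : ∀ x y : ℂ, ‖x - y‖ ^ 2 = ‖x‖ ^ 2 + ‖y‖ ^ 2 - 2 * (x * conj y).re := by
      intro x y
      simp only [Complex.sq_norm]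
      exact Complex.normSq_sub x y
    have hpointwise : ∀ i, ‖F i‖ ^ 2
        = ‖φ i z‖ ^ 2 + ‖E i‖ ^ 2 - 2 * (conj (φ i z) * conj (E i)).re := by
      intro i
      simp only [hFdef]
      rw [key (conj (φ i z)) (E i), RCLike.norm_conj]
    rw [Finset.sum_congr rfl fun i _ => hpointwise i, Finset.sum_sub_distrib,
      Finset.sum_add_distrib, ← Finset.mul_sum, hEreal]
    ring
  -- (K4) : bound on the E-part
  have hWn : ∀ j, j ≤ n → (∑ i ∈ Finset.range (n + 1), ‖Wc j i‖ ^ 2)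
      = ‖c j‖ ^ 2 + ‖d j‖ ^ 2 := by
    intro j hj
    have hsplit : ∀ i, ‖Wc j i‖ ^ 2
        = (if i = j then ‖c j‖ ^ 2 else 0) + (if i + 1 = j then ‖d j‖ ^ 2 else 0) := by
      intro i
      by_cases h1 : i = j <;> by_cases h2 : i + 1 = j
      · omega
      · simp [hWcdef, h1, h2]
      · simp [hWcdef, h1, h2]
      · simp [hWcdef, h1, h2]
    rw [Finset.sum_congr rfl fun i _ => hsplit i, Finset.sum_add_distrib]
    have hfirst : (∑ i ∈ Finset.range (n + 1), if i = j then ‖c j‖ ^ 2 else 0)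
        = ‖c j‖ ^ 2 := by
      rw [Finset.sum_ite_eq' (Finset.range (n + 1)) j (fun _ => ‖c j‖ ^ 2)]
      simp [Finset.mem_range, Nat.lt_succ_of_le hj]
    have hsecond : (∑ i ∈ Finset.range (n + 1), if i + 1 = j then ‖d j‖ ^ 2 else 0)
        = ‖d j‖ ^ 2 := by
      rcases j with _ | k
      · simp [hd0]
      · calc (∑ i ∈ Finset.range (n + 1), if i + 1 = k + 1 then ‖d (k+1)‖ ^ 2 else 0)
            = ∑ i ∈ Finset.range (n + 1), if i = k then ‖d (k+1)‖ ^ 2 else 0 :=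
              Finset.sum_congr rfl fun i _ => by
                rw [if_congr (by omega : (i + 1 = k + 1) ↔ (i = k)) rfl rfl]
          _ = ‖d (k+1)‖ ^ 2 := by
              rw [Finset.sum_ite_eq' (Finset.range (n + 1)) k (fun _ => ‖d (k+1)‖ ^ 2),
                if_pos (Finset.mem_range.mpr (by omega : k < n + 1))]
    rw [hfirst, hsecond]
  have hCD : ∀ j, ‖c j‖ ^ 2 + ‖d j‖ ^ 2 ≤ m0 * (kt j ^ 2 * (1 + ‖a j‖ ^ 2)) := by
    intro j
    have hc2 : ‖c j‖ ^ 2 = kt j ^ 2 * nrm j ^ 2 := by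
      simp only [hcdef, norm_mul, Complex.norm_real, Real.norm_eq_abs]
      rw [_root_.abs_of_nonneg (hkt0 j), _root_.abs_of_nonneg (hnrm_pos j).le]
      ring
    have hd2 : ‖d j‖ ^ 2 = kt j ^ 2 * ‖a j‖ ^ 2 * nrm (j - 1) ^ 2 := by
      simp only [hddef, norm_mul, Complex.norm_real, Real.norm_eq_abs]
      rw [_root_.abs_of_nonneg (hkt0 j), _root_.abs_of_nonneg (hnrm_pos (j-1)).le]
      ring
    rw [hc2, hd2]
    have h1 := hnrm_le j
    have h2 := hnrm_le (j - 1)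
    have h3 : 0 ≤ kt j ^ 2 := sq_nonneg _
    have h4 : 0 ≤ ‖a j‖ ^ 2 := sq_nonneg _
    nlinarith [mul_le_mul_of_nonneg_left h1 h3,
      mul_le_mul_of_nonneg_left h2 (mul_nonneg h3 h4)]
  have hK4 : ∑ i ∈ Finset.range (n + 1), ‖E i‖ ^ 2
      ≤ (∑ j ∈ Finset.range (n + 1), ‖φt j z‖ ^ 2)
        * (m0 * ∑ j ∈ Finset.range (n + 1), kt j ^ 2 * (1 + ‖a j‖ ^ 2)) := by
    have step1 : ∀ i, ‖E i‖ ^ 2 ≤ (∑ j ∈ Finset.range (n + 1), ‖g j‖ * ‖Wc j i‖) ^ 2 := by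
      intro i
      refine pow_le_pow_left₀ (norm_nonneg _) ?_ 2
      calc ‖E i‖ ≤ ∑ j ∈ Finset.range (n + 1), ‖g j * Wc j i‖ := norm_sum_le _ _
        _ = ∑ j ∈ Finset.range (n + 1), ‖g j‖ * ‖Wc j i‖ :=
          Finset.sum_congr rfl fun j _ => norm_mul _ _
    have step2 : ∑ i ∈ Finset.range (n + 1), ‖E i‖ ^ 2
        ≤ (∑ j ∈ Finset.range (n + 1),
            ‖g j‖ * Real.sqrt (∑ i ∈ Finset.range (n + 1), ‖Wc j i‖ ^ 2)) ^ 2 := by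
      refine le_trans (Finset.sum_le_sum fun i _ => step1 i) ?_
      exact aux_mink (Finset.range (n + 1)) (Finset.range (n + 1))
        (fun j => ‖g j‖) (fun j i => ‖Wc j i‖) (fun j => norm_nonneg _)
        (fun j i => norm_nonneg _)
    have step3 : (∑ j ∈ Finset.range (n + 1),
          ‖g j‖ * Real.sqrt (∑ i ∈ Finset.range (n + 1), ‖Wc j i‖ ^ 2)) ^ 2
        ≤ (∑ j ∈ Finset.range (n + 1), ‖g j‖ ^ 2)
          * ∑ j ∈ Finset.range (n + 1),
              (Real.sqrt (∑ i ∈ Finset.range (n + 1), ‖Wc j i‖ ^ 2)) ^ 2 :=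
      Finset.sum_mul_sq_le_sq_mul_sq _ _ _
    have hsq : ∀ j, j ≤ n → (Real.sqrt (∑ i ∈ Finset.range (n + 1), ‖Wc j i‖ ^ 2)) ^ 2
        = ‖c j‖ ^ 2 + ‖d j‖ ^ 2 := by
      intro j hj
      rw [Real.sq_sqrt (Finset.sum_nonneg fun i _ => sq_nonneg _), hWn j hj]
    have hgsq : (∑ j ∈ Finset.range (n + 1), ‖g j‖ ^ 2)
        = ∑ j ∈ Finset.range (n + 1), ‖φt j z‖ ^ 2 := by
      refine Finset.sum_congr rfl fun j _ => ?_
      simp only [hgdef]; rw [RCLike.norm_conj]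
    have hsum4 : ∑ j ∈ Finset.range (n + 1),
          (Real.sqrt (∑ i ∈ Finset.range (n + 1), ‖Wc j i‖ ^ 2)) ^ 2
        ≤ m0 * ∑ j ∈ Finset.range (n + 1), kt j ^ 2 * (1 + ‖a j‖ ^ 2) := by
      rw [Finset.mul_sum]
      refine Finset.sum_le_sum fun j hj => ?_
      rw [hsq j (by rw [Finset.mem_range] at hj; omega)]
      exact hCD j
    have hg0 : 0 ≤ ∑ j ∈ Finset.range (n + 1), ‖φt j z‖ ^ 2 :=
      Finset.sum_nonneg fun j _ => sq_nonneg _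
    calc ∑ i ∈ Finset.range (n + 1), ‖E i‖ ^ 2
        ≤ (∑ j ∈ Finset.range (n + 1), ‖g j‖ ^ 2)
          * ∑ j ∈ Finset.range (n + 1),
              (Real.sqrt (∑ i ∈ Finset.range (n + 1), ‖Wc j i‖ ^ 2)) ^ 2 :=
          le_trans step2 step3
      _ ≤ (∑ j ∈ Finset.range (n + 1), ‖φt j z‖ ^ 2)
          * (m0 * ∑ j ∈ Finset.range (n + 1), kt j ^ 2 * (1 + ‖a j‖ ^ 2)) := by
          rw [hgsq]
          exact mul_le_mul_of_nonneg_left hsum4 hg0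
  -- final assembly
  have hFbound : ∑ i ∈ Finset.range (n + 1), ‖F i‖ ^ 2
      ≤ (Kμ n z z).re - (Kμt n z z).re *
          (2 - m0 * ∑ j ∈ Finset.range (n + 1), kt j ^ 2 * (1 + ‖a j‖ ^ 2)) := by
    rw [hZre, hZtre]
    have := hK4
    rw [hK3]
    nlinarith [this]
  have hWr0 : 0 ≤ (Kμ n w w).re := by
    rw [hWre]; exact Finset.sum_nonneg fun i _ => sq_nonneg _
  calc ‖Kμ n z w - Kμt n z w‖ ^ 2
      = ‖∑ i ∈ Finset.range (n + 1), F i * φ i w‖ ^ 2 := by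
        rw [← hK2, RCLike.norm_conj]
    _ ≤ (∑ i ∈ Finset.range (n + 1), ‖F i‖ * ‖φ i w‖) ^ 2 := by
        refine pow_le_pow_left₀ (norm_nonneg _) ?_ 2
        calc ‖∑ i ∈ Finset.range (n + 1), F i * φ i w‖
            ≤ ∑ i ∈ Finset.range (n + 1), ‖F i * φ i w‖ := norm_sum_le _ _
          _ = ∑ i ∈ Finset.range (n + 1), ‖F i‖ * ‖φ i w‖ :=
            Finset.sum_congr rfl fun i _ => norm_mul _ _
    _ ≤ (∑ i ∈ Finset.range (n + 1), ‖F i‖ ^ 2)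
          * ∑ i ∈ Finset.range (n + 1), ‖φ i w‖ ^ 2 :=
        Finset.sum_mul_sq_le_sq_mul_sq _ _ _
    _ ≤ ((Kμ n z z).re - (Kμt n z z).re *
          (2 - m0 * ∑ j ∈ Finset.range (n + 1), kt j ^ 2 * (1 + ‖a j‖ ^ 2)))
          * (Kμ n w w).re := by
        rw [hWre] at hWr0 ⊢
        exact mul_le_mul_of_nonneg_right hFbound hWr0
    _ = (Kμ n w w).re *
          ((Kμ n z z).re - (Kμt n z z).re *
            (2 - m0 * ∑ j ∈ Finset.range (n + 1), kt j ^ 2 * (1 + ‖a j‖ ^ 2))) :=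
        mul_comm _ _
end

section
/- Let μ be a nontrivial finite positive Borel measure on the unit circle and {Φ_j}_{j=0}^{n} a monic orthogonal polynomial sequence for μ. Define the kernel-type polynomial 𝒦_n(z,w,μ) = Σ_{j=0}^n conj(Φ_j(w))·Φ_j(z). Let p be a polynomial of degree at most n such that Re(⟨p, Φ_j⟩_μ) ≥ 0 for every j = 0, 1, …, n, and let w ∈ ℂ be such that Φ_j(w) is real and Φ_j(w) ≥ 0 for every j = 0, 1, …, n. Then Re( ∫_{∂𝔻} conj(p(z))·𝒦_n(z,w,μ) dμ(z) ) ≤ m₀(μ)·Re(p(w)), where m₀(μ) = μ(∂𝔻). In particular, if μ is a probability measure then Re( ∫ conj(p(z))·𝒦_n(z,w,μ) dμ(z) ) ≤ Re(p(w)). -/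
open MeasureTheory Complex ComplexConjugate

lemma aux_integ (μ : Measure ℂ) [IsFiniteMeasure μ]
    (hsupp : μ (Metric.sphere (0 : ℂ) 1)ᶜ = 0)
    (f : ℂ → ℂ) (hf : Continuous f) : Integrable f μ := by
  obtain ⟨C, hC⟩ := (isCompact_sphere (0:ℂ) 1).exists_bound_of_continuousOn hf.continuousOn
  have hae : ∀ᵐ z ∂μ, z ∈ Metric.sphere (0:ℂ) 1 := by
    rw [ae_iff]
    convert hsupp using 2
    rfl
  refine Integrable.mono' (integrable_const C) hf.aestronglyMeasurable ?_
  filter_upwards [hae] with z hz using hC z hz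

lemma aux_decomp (Φ : ℕ → Polynomial ℂ) :
    ∀ m, (∀ j ≤ m, (Φ j).Monic) → (∀ j ≤ m, (Φ j).natDegree = j) →
    ∀ p : Polynomial ℂ, p.degree ≤ (m : WithBot ℕ) →
    ∃ c : ℕ → ℂ, p = ∑ j ∈ Finset.range (m+1), Polynomial.C (c j) * Φ j := by
  intro m
  induction m with
  | zero =>
    intro hm hd p hp
    have h1 : Φ 0 = 1 := by
      have := (hm 0 le_rfl)
      exact this.natDegree_eq_zero.mp (hd 0 le_rfl)
    refine ⟨fun _ => p.coeff 0, ?_⟩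
    rw [Polynomial.eq_C_of_degree_le_zero hp]
    simp [h1]
  | succ m ih =>
    intro hm hd p hp
    set a := p.coeff (m+1) with ha
    set q := p - Polynomial.C a * Φ (m+1) with hq
    have hqd : q.degree ≤ (m : WithBot ℕ) := by
      rw [Polynomial.degree_le_iff_coeff_zero]
      intro k hk
      have hk' : m < k := by exact_mod_cast hk
      have hΦd : (Φ (m+1)).natDegree = m+1 := hd (m+1) le_rfl
      rcases eq_or_lt_of_le (Nat.succ_le_of_lt hk') with h | h
      · have : (Φ (m+1)).coeff (m+1) = 1 := by
          have := (hm (m+1) le_rfl).coeff_natDegree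
          rwa [hΦd] at this
        simp [hq, ← h, this, ha]
      · have h1 : p.coeff k = 0 := by
          apply Polynomial.coeff_eq_zero_of_degree_lt
          exact lt_of_le_of_lt hp (by exact_mod_cast h)
        have h2 : (Φ (m+1)).coeff k = 0 := by
          apply Polynomial.coeff_eq_zero_of_natDegree_lt
          omega
        simp [hq, h1, h2]
    obtain ⟨c, hc⟩ := ih (fun j hj => hm j (hj.trans (Nat.le_succ m)))
      (fun j hj => hd j (hj.trans (Nat.le_succ m))) q hqd
    refine ⟨Function.update c (m+1) a, ?_⟩
    rw [Finset.sum_range_succ]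
    have : ∀ j ∈ Finset.range (m+1),
        Polynomial.C (Function.update c (m+1) a j) * Φ j = Polynomial.C (c j) * Φ j := by
      intro j hj
      rw [Function.update_of_ne (by simp at hj; omega)]
    rw [Finset.sum_congr rfl this, ← hc, Function.update_self]
    simp [hq]

/-- Sub-reproducing property of the kernel-type polynomial
`𝒦_n(z,w,μ) = Σ_{j=0}^n conj(Φ_j(w)) Φ_j(z)` built from monic orthogonal polynomials:
`Re(∫ conj(p) 𝒦_n(·,w) dμ) ≤ m₀(μ) Re(p(w))`, and `≤ Re(p(w))` for probability `μ`. -/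
theorem stmt_16
    (μ : Measure ℂ) [IsFiniteMeasure μ]
    (hsupp : μ (Metric.sphere (0 : ℂ) 1)ᶜ = 0)
    (hnt : ∀ q : Polynomial ℂ, q ≠ 0 → 0 < ∫ z, ‖q.eval z‖ ^ 2 ∂μ)
    (n : ℕ)
    (Φ : ℕ → Polynomial ℂ)
    (hmonic : ∀ j ≤ n, (Φ j).Monic) (hdeg : ∀ j ≤ n, (Φ j).natDegree = j)
    (horth : ∀ j ≤ n, ∀ k ≤ n, j ≠ k →
      (∫ z, (Φ j).eval z * conj ((Φ k).eval z) ∂μ) = 0)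
    (K : ℂ → ℂ → ℂ)
    (hK : ∀ z w : ℂ,
      K z w = ∑ j ∈ Finset.range (n + 1), conj ((Φ j).eval w) * (Φ j).eval z)
    (p : Polynomial ℂ) (hp : p.degree ≤ (n : WithBot ℕ))
    (hpΦ : ∀ j ≤ n, 0 ≤ (∫ z, p.eval z * conj ((Φ j).eval z) ∂μ).re)
    (w : ℂ)
    (hw : ∀ j ≤ n, ((Φ j).eval w).im = 0 ∧ 0 ≤ ((Φ j).eval w).re) :
    (∫ z, conj (p.eval z) * K z w ∂μ).re
        ≤ (μ (Metric.sphere (0 : ℂ) 1)).toReal * (p.eval w).re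
    ∧ (μ Set.univ = 1 →
        (∫ z, conj (p.eval z) * K z w ∂μ).re ≤ (p.eval w).re) := by
  classical
  set m₀ : ℝ := (μ (Metric.sphere (0 : ℂ) 1)).toReal with hm₀
  have hμuniv : μ Set.univ = μ (Metric.sphere (0:ℂ) 1) := by
    rw [← measure_add_measure_compl (Metric.isClosed_sphere.measurableSet), hsupp, add_zero]
  have hint : ∀ f : ℂ → ℂ, Continuous f → Integrable f μ := aux_integ μ hsupp
  have hcont : ∀ q r : Polynomial ℂ, Continuous fun z => q.eval z * conj (r.eval z) :=
    fun q r => q.continuous.mul (Complex.continuous_conj.comp r.continuous)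
  -- notation for the "Gram" integrals
  set N : ℕ → ℂ := fun j => ∫ z, (Φ j).eval z * conj ((Φ j).eval z) ∂μ with hN
  -- pulling finite sums out of the left slot
  have hJsum : ∀ (c : ℕ → ℂ) (m : ℕ) (r : Polynomial ℂ),
      (∫ z, (∑ k ∈ Finset.range m, Polynomial.C (c k) * Φ k).eval z * conj (r.eval z) ∂μ)
        = ∑ k ∈ Finset.range m, c k * ∫ z, (Φ k).eval z * conj (r.eval z) ∂μ := by
    intro c m r
    calc (∫ z, (∑ k ∈ Finset.range m, Polynomial.C (c k) * Φ k).eval z * conj (r.eval z) ∂μ)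
        = ∫ z, ∑ k ∈ Finset.range m, c k * ((Φ k).eval z * conj (r.eval z)) ∂μ := by
          apply integral_congr_ae; filter_upwards with z
          rw [Polynomial.eval_finset_sum, Finset.sum_mul]
          exact Finset.sum_congr rfl (by intros; simp; ring)
      _ = ∑ k ∈ Finset.range m, ∫ z, c k * ((Φ k).eval z * conj (r.eval z)) ∂μ :=
          integral_finset_sum _ (fun k _ => ((hint _ (hcont _ _)).const_mul _))
      _ = ∑ k ∈ Finset.range m, c k * ∫ z, (Φ k).eval z * conj (r.eval z) ∂μ :=
          Finset.sum_congr rfl (fun k _ => integral_const_mul _ _)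
  -- self inner products are real
  have hself : ∀ q : Polynomial ℂ,
      (∫ z, q.eval z * conj (q.eval z) ∂μ) = ((∫ z, ‖q.eval z‖^2 ∂μ : ℝ) : ℂ) := by
    intro q
    calc (∫ z, q.eval z * conj (q.eval z) ∂μ)
        = ∫ z, ((‖q.eval z‖^2 : ℝ) : ℂ) ∂μ := by
          apply integral_congr_ae; filter_upwards with z
          rw [Complex.mul_conj]
          norm_cast
          simp [Complex.normSq_eq_norm_sq]
      _ = _ := integral_ofReal
  -- orthogonality against lower-degree polynomials
  have hlow : ∀ j ≤ n, ∀ r : Polynomial ℂ, r.degree < (j : WithBot ℕ) →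
      (∫ z, r.eval z * conj ((Φ j).eval z) ∂μ) = 0 := by
    intro j hj r hr
    match j, hj, hr with
    | 0, _, hr =>
      have hr0 : r = 0 := by
        rw [← Polynomial.degree_eq_bot]
        simpa [Nat.WithBot.lt_zero_iff] using hr
      simp [hr0]
    | m+1, hj, hr =>
      have hrm : r.degree ≤ (m : WithBot ℕ) := by
        rw [Polynomial.degree_le_iff_coeff_zero]
        intro k hk
        apply Polynomial.coeff_eq_zero_of_degree_lt
        refine lt_of_lt_of_le hr ?_
        have : m < k := by exact_mod_cast hk
        exact_mod_cast this
      obtain ⟨d, hd'⟩ := aux_decomp Φ m (fun k hk => hmonic k (by omega))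
        (fun k hk => hdeg k (by omega)) r hrm
      rw [hd', hJsum]
      apply Finset.sum_eq_zero
      intro k hk
      simp only [Finset.mem_range] at hk
      rw [horth k (by omega) (m+1) hj (by omega), mul_zero]
  -- norm bound : (N j).re ≤ m₀
  have hNle : ∀ j ≤ n, (N j).re ≤ m₀ := by
    intro j hj
    set r : Polynomial ℂ := Polynomial.X ^ j - Φ j with hr
    have hrdeg : r.degree < (j : WithBot ℕ) := by
      have h1 : (Polynomial.X ^ j : Polynomial ℂ).degree = (j : WithBot ℕ) :=
        Polynomial.degree_X_pow j
      have := Polynomial.degree_sub_lt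
        (p := (Polynomial.X ^ j : Polynomial ℂ)) (q := Φ j)
        (by rw [h1, Polynomial.degree_eq_natDegree (hmonic j hj).ne_zero, hdeg j hj])
        (Polynomial.monic_X_pow j).ne_zero
        (by rw [(Polynomial.monic_X_pow j).leadingCoeff, (hmonic j hj).leadingCoeff])
      rwa [h1] at this
    have ho1 : (∫ z, r.eval z * conj ((Φ j).eval z) ∂μ) = 0 := hlow j hj r hrdeg
    have ho2 : (∫ z, (Φ j).eval z * conj (r.eval z) ∂μ) = 0 := by
      have h1 : (∫ z, (Φ j).eval z * conj (r.eval z) ∂μ)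
          = ∫ z, conj (r.eval z * conj ((Φ j).eval z)) ∂μ := by
        apply integral_congr_ae; filter_upwards with z
        rw [map_mul, Complex.conj_conj]; ring
      rw [h1, integral_conj, ho1, map_zero]
    have hsum : (∫ z, (Polynomial.X ^ j : Polynomial ℂ).eval z
          * conj ((Polynomial.X ^ j : Polynomial ℂ).eval z) ∂μ)
        = N j + (∫ z, r.eval z * conj (r.eval z) ∂μ) := by
      have hXj : (Polynomial.X ^ j : Polynomial ℂ) = Φ j + r := by rw [hr]; ring
      calc (∫ z, (Polynomial.X ^ j : Polynomial ℂ).eval z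
            * conj ((Polynomial.X ^ j : Polynomial ℂ).eval z) ∂μ)
          = ∫ z, ((Φ j).eval z * conj ((Φ j).eval z) + (Φ j).eval z * conj (r.eval z))
              + (r.eval z * conj ((Φ j).eval z) + r.eval z * conj (r.eval z)) ∂μ := by
            apply integral_congr_ae; filter_upwards with z
            rw [hXj]
            simp only [Polynomial.eval_add, map_add]
            ring
        _ = ((∫ z, (Φ j).eval z * conj ((Φ j).eval z) ∂μ)
              + (∫ z, (Φ j).eval z * conj (r.eval z) ∂μ))
            + ((∫ z, r.eval z * conj ((Φ j).eval z) ∂μ)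
              + (∫ z, r.eval z * conj (r.eval z) ∂μ)) := by
            have I1 : Integrable (fun z => (Φ j).eval z * conj ((Φ j).eval z)) μ :=
              hint _ (hcont (Φ j) (Φ j))
            have I2 : Integrable (fun z => (Φ j).eval z * conj (r.eval z)) μ :=
              hint _ (hcont (Φ j) r)
            have I3 : Integrable (fun z => r.eval z * conj ((Φ j).eval z)) μ :=
              hint _ (hcont r (Φ j))
            have I4 : Integrable (fun z => r.eval z * conj (r.eval z)) μ :=
              hint _ (hcont r r)
            have e12 : (∫ z, ((Φ j).eval z * conj ((Φ j).eval z)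
                  + (Φ j).eval z * conj (r.eval z)) ∂μ)
                = (∫ z, (Φ j).eval z * conj ((Φ j).eval z) ∂μ)
                  + ∫ z, (Φ j).eval z * conj (r.eval z) ∂μ := integral_add I1 I2
            have e34 : (∫ z, (r.eval z * conj ((Φ j).eval z)
                  + r.eval z * conj (r.eval z)) ∂μ)
                = (∫ z, r.eval z * conj ((Φ j).eval z) ∂μ)
                  + ∫ z, r.eval z * conj (r.eval z) ∂μ := integral_add I3 I4
            have e : (∫ z, ((Φ j).eval z * conj ((Φ j).eval z)
                  + (Φ j).eval z * conj (r.eval z))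
                  + (r.eval z * conj ((Φ j).eval z) + r.eval z * conj (r.eval z)) ∂μ)
                = (∫ z, ((Φ j).eval z * conj ((Φ j).eval z)
                  + (Φ j).eval z * conj (r.eval z)) ∂μ)
                  + ∫ z, (r.eval z * conj ((Φ j).eval z)
                  + r.eval z * conj (r.eval z)) ∂μ := integral_add (I1.add I2) (I3.add I4)
            rw [e, e12, e34]
        _ = N j + (∫ z, r.eval z * conj (r.eval z) ∂μ) := by
            rw [ho1, ho2, hN]; ring
    have hXval : (∫ z, (Polynomial.X ^ j : Polynomial ℂ).eval z
          * conj ((Polynomial.X ^ j : Polynomial ℂ).eval z) ∂μ) = (m₀ : ℂ) := by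
      have hae : ∀ᵐ z ∂μ, z ∈ Metric.sphere (0:ℂ) 1 := by
        rw [ae_iff]; convert hsupp using 2; rfl
      calc (∫ z, (Polynomial.X ^ j : Polynomial ℂ).eval z
            * conj ((Polynomial.X ^ j : Polynomial ℂ).eval z) ∂μ)
          = ∫ _z, (1:ℂ) ∂μ := by
            apply integral_congr_ae
            filter_upwards [hae] with z hz
            have hz1 : z * conj z = 1 := by
              rw [Complex.mul_conj]
              have : ‖z‖ = 1 := by simpa using hz
              norm_cast
              rw [Complex.normSq_eq_norm_sq, this, one_pow]
            rw [Polynomial.eval_pow, Polynomial.eval_X, map_pow, ← mul_pow, hz1, one_pow]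
        _ = (m₀ : ℂ) := by
            rw [integral_const, measureReal_def, hμuniv, Complex.real_smul, mul_one]
    have hrre : 0 ≤ (∫ z, r.eval z * conj (r.eval z) ∂μ).re := by
      rw [hself r, Complex.ofReal_re]
      exact integral_nonneg fun z => by positivity
    have := congrArg Complex.re (hXval.symm.trans hsum)
    rw [Complex.ofReal_re, Complex.add_re] at this
    linarith
  -- positivity and realness of N j
  have hNre : ∀ j, (N j).re = ∫ z, ‖(Φ j).eval z‖^2 ∂μ := by
    intro j; rw [hN]; simp only; rw [hself]; exact Complex.ofReal_re _
  have hNim : ∀ j, (N j).im = 0 := by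
    intro j; rw [hN]; simp only; rw [hself]; exact Complex.ofReal_im _
  have hNpos : ∀ j ≤ n, 0 < (N j).re := by
    intro j hj; rw [hNre]; exact hnt _ (hmonic j hj).ne_zero
  -- decompose p
  obtain ⟨c, hc⟩ := aux_decomp Φ n hmonic hdeg p hp
  have hG : ∀ j ≤ n, (∫ z, p.eval z * conj ((Φ j).eval z) ∂μ) = c j * N j := by
    intro j hj
    have hz : ∀ k ∈ Finset.range (n+1), k ≠ j →
        c k * ∫ z, (Φ k).eval z * conj ((Φ j).eval z) ∂μ = 0 := by
      intro k hk hkj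
      simp only [Finset.mem_range] at hk
      rw [horth k (by omega) j hj hkj, mul_zero]
    rw [hc, hJsum, Finset.sum_eq_single_of_mem j (Finset.mem_range.mpr (by omega)) hz]
  -- real parts of coefficients are nonnegative
  have hcre : ∀ j ≤ n, 0 ≤ (c j).re := by
    intro j hj
    have h1 := hpΦ j hj
    rw [hG j hj, Complex.mul_re, hNim j, mul_zero, sub_zero, mul_comm] at h1
    exact nonneg_of_mul_nonneg_right h1 (hNpos j hj)
  -- compute the main integral
  have hA : (∫ z, conj (p.eval z) * K z w ∂μ)
      = ∑ j ∈ Finset.range (n+1), ((Φ j).eval w) * conj (c j * N j) := by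
    calc (∫ z, conj (p.eval z) * K z w ∂μ)
        = ∫ z, ∑ j ∈ Finset.range (n+1),
            conj ((Φ j).eval w) * (conj (p.eval z) * (Φ j).eval z) ∂μ := by
          apply integral_congr_ae; filter_upwards with z
          rw [hK z w, Finset.mul_sum]
          exact Finset.sum_congr rfl (by intros; ring)
      _ = ∑ j ∈ Finset.range (n+1),
            conj ((Φ j).eval w) * ∫ z, conj (p.eval z) * (Φ j).eval z ∂μ := by
          have hI : ∀ j : ℕ, Integrable
              (fun z => conj ((Φ j).eval w) * (conj (p.eval z) * (Φ j).eval z)) μ := by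
            intro j
            exact hint _ (continuous_const.mul
              ((Complex.continuous_conj.comp p.continuous).mul (Φ j).continuous))
          rw [integral_finset_sum _ (fun j _ => hI j)]
          exact Finset.sum_congr rfl (fun j _ => integral_const_mul _ _)
      _ = ∑ j ∈ Finset.range (n+1), ((Φ j).eval w) * conj (c j * N j) := by
          apply Finset.sum_congr rfl
          intro j hj
          have hj' : j ≤ n := by simp only [Finset.mem_range] at hj; omega
          have h1 : (∫ z, conj (p.eval z) * (Φ j).eval z ∂μ)
              = conj (∫ z, p.eval z * conj ((Φ j).eval z) ∂μ) := by
            rw [← integral_conj]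
            apply integral_congr_ae; filter_upwards with z
            rw [map_mul, Complex.conj_conj]
          rw [h1, hG j hj']
          congr 1
          exact (Complex.conj_eq_iff_im.mpr (hw j hj').1)
  have hAre : (∫ z, conj (p.eval z) * K z w ∂μ).re
      = ∑ j ∈ Finset.range (n+1), ((Φ j).eval w).re * ((c j).re * (N j).re) := by
    rw [hA, Complex.re_sum]
    apply Finset.sum_congr rfl
    intro j hj
    have hj' : j ≤ n := by simp only [Finset.mem_range] at hj; omega
    rw [Complex.mul_re, (hw j hj').1, zero_mul, sub_zero, Complex.conj_re,
      Complex.mul_re, hNim j, mul_zero, sub_zero]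
  have hpw : (p.eval w).re = ∑ j ∈ Finset.range (n+1), (c j).re * ((Φ j).eval w).re := by
    conv_lhs => rw [hc]
    rw [Polynomial.eval_finset_sum, Complex.re_sum]
    apply Finset.sum_congr rfl
    intro j hj
    have hj' : j ≤ n := by simp only [Finset.mem_range] at hj; omega
    rw [Polynomial.eval_mul, Polynomial.eval_C, Complex.mul_re, (hw j hj').1,
      mul_zero, sub_zero]
  have main : (∫ z, conj (p.eval z) * K z w ∂μ).re ≤ m₀ * (p.eval w).re := by
    rw [hAre, hpw, Finset.mul_sum]
    apply Finset.sum_le_sum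
    intro j hj
    have hj' : j ≤ n := by simp only [Finset.mem_range] at hj; omega
    have h1 := (hw j hj').2
    have h2 := hcre j hj'
    have h3 := hNle j hj'
    have h4 := (hNpos j hj').le
    nlinarith [mul_nonneg (mul_nonneg h1 h2) (sub_nonneg.mpr h3)]
  refine ⟨main, fun h1 => ?_⟩
  have hm1 : m₀ = 1 := by
    rw [hm₀, ← hμuniv, h1, ENNReal.toReal_one]
  rw [hm1, one_mul] at main
  exact main
end
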